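/- arXiv:2406.04544 — 4 statements merged into one kernel-verified Lean document; each statement's English description precedes it below -/
import Mathlib

section
/- There is a constant C depending only on k₁,…,kₙ such that for all sufficiently small t > 0, the (n−1)-dimensional Hausdorff measure of the set Aⁿ(t) = { y ∈ ℝⁿ : ∏ᵢ yᵢ^{kᵢ} = t, 0 < yᵢ < 1 for all i } is at most C. -/
open MeasureTheory Finset
open scoped ENNReal NNReal

lemma exp_aux {x : ℝ} (hx : 0 ≤ x) : Real.exp x ≤ 1 + x * Real.exp x := by
  have h1 := Real.add_one_le_exp (-x)
  have h2 : Real.exp (-x) * Real.exp x = 1 := by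
    rw [← Real.exp_add]; simp
  nlinarith [Real.exp_pos x]

lemma rpow_one_add_aux {E u : ℝ} (hE : 0 ≤ E) (hu : 0 ≤ u) (hu1 : u ≤ 1) :
    (1 + u) ^ E ≤ 1 + E * Real.exp E * u := by
  have h1 : (0:ℝ) < 1 + u := by linarith
  have hlog : Real.log (1 + u) ≤ u := by
    have := Real.log_le_sub_one_of_pos h1; linarith
  have h2 : (1 + u) ^ E = Real.exp (E * Real.log (1 + u)) := by
    rw [Real.rpow_def_of_pos h1, mul_comm]
  rw [h2]
  have h3 : Real.exp (E * Real.log (1 + u)) ≤ Real.exp (E * u) :=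
    Real.exp_le_exp.2 (by nlinarith)
  have h4 : Real.exp (E * u) ≤ 1 + (E * u) * Real.exp (E * u) := exp_aux (by positivity)
  have h5 : Real.exp (E * u) ≤ Real.exp E := Real.exp_le_exp.2 (by nlinarith)
  have h6 : (E * u) * Real.exp (E * u) ≤ E * Real.exp E * u := by
    rw [mul_comm (E * u)]
    have : Real.exp (E * u) * (E * u) ≤ Real.exp E * (E * u) := by
      apply mul_le_mul_of_nonneg_right h5 (by positivity)
    nlinarith
  linarith

/-- Core estimate: if `b / a = ∏ (x j / x' j) ^ e j`, with `b ≤ x' j` for all `j`, then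
`b - a` is controlled linearly by the coordinatewise distance `δ`. -/
lemma key_half {ι : Type*} [Fintype ι] (e : ι → ℝ) (he : ∀ j, 0 ≤ e j)
    (x x' : ι → ℝ) (hx : ∀ j, 0 < x j) (hx' : ∀ j, 0 < x' j)
    {a b δ : ℝ} (ha : 0 < a) (hab : a ≤ b)
    (hrat : b / a = ∏ j, (x j / x' j) ^ (e j)) (hx'b : ∀ j, b ≤ x' j)
    (hδ : ∀ j, |x j - x' j| ≤ δ) (hδ0 : 0 ≤ δ) :
    b - a ≤ (1 + (∑ j, e j) * Real.exp (∑ j, e j)) * δ := by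
  classical
  set E := ∑ j, e j with hE
  have hE0 : 0 ≤ E := Finset.sum_nonneg fun j _ => he j
  have hcoef : (1:ℝ) ≤ 1 + E * Real.exp E := by nlinarith [Real.exp_pos E]
  by_cases hEz : E = 0
  · -- all e j = 0, so ratio is 1 and b = a
    have hez : ∀ j ∈ Finset.univ, e j = 0 := by
      intro j _
      exact (Finset.sum_eq_zero_iff_of_nonneg (fun j _ => he j)).1 hEz j (Finset.mem_univ j)
    have : b / a = 1 := by
      rw [hrat]
      apply Finset.prod_eq_one
      intro j _
      rw [hez j (Finset.mem_univ j), Real.rpow_zero]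
    have hba : b = a := by
      field_simp at this; linarith
    nlinarith
  · have hEpos : 0 < E := lt_of_le_of_ne hE0 (Ne.symm hEz)
    by_cases hbδ : b ≤ δ
    · nlinarith
    · push_neg at hbδ
      have hb0 : 0 < b := lt_of_le_of_lt hδ0 hbδ
      set u := δ / b with hu
      have hu0 : 0 ≤ u := div_nonneg hδ0 hb0.le
      have hu1 : u ≤ 1 := by
        rw [hu, div_le_one hb0]; exact hbδ.le
      -- AM-GM step
      have hz : ∀ j, 0 ≤ x j / x' j := fun j => div_nonneg (hx j).le (hx' j).le
      have hzu : ∀ j, x j / x' j ≤ 1 + u := by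
        intro j
        have h1 : x j ≤ x' j + δ := by
          have := hδ j; rw [abs_le] at this; linarith [this.2]
        have h2 : δ ≤ u * x' j := by
          rw [hu, div_mul_eq_mul_div, le_div_iff₀ hb0]
          have := hx'b j
          nlinarith
        rw [div_le_iff₀ (hx' j)]
        nlinarith
      have hratle : b / a ≤ (1 + u) ^ E := by
        rw [hrat]
        have h1 : ∀ j, (x j / x' j) ^ (e j) = ((x j / x' j) ^ (e j / E)) ^ E := by
          intro j
          rw [← Real.rpow_mul (hz j), div_mul_cancel₀ _ hEz]
        calc ∏ j, (x j / x' j) ^ (e j)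
            = ∏ j, ((x j / x' j) ^ (e j / E)) ^ E := by
              exact Finset.prod_congr rfl fun j _ => h1 j
          _ = (∏ j, (x j / x' j) ^ (e j / E)) ^ E := by
              exact Real.finset_prod_rpow _ _ (fun j _ => Real.rpow_nonneg (hz j) _) _
          _ ≤ (∑ j, (e j / E) * (x j / x' j)) ^ E := by
              apply Real.rpow_le_rpow
              · exact Finset.prod_nonneg fun j _ => Real.rpow_nonneg (hz j) _
              · apply Real.geom_mean_le_arith_mean_weighted
                · exact fun j _ => div_nonneg (he j) hE0
                · rw [← Finset.sum_div, div_self hEz]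
                · exact fun j _ => hz j
              · exact hE0
          _ ≤ (1 + u) ^ E := by
              apply Real.rpow_le_rpow
              · exact Finset.sum_nonneg fun j _ => mul_nonneg (div_nonneg (he j) hE0) (hz j)
              · calc ∑ j, (e j / E) * (x j / x' j)
                    ≤ ∑ j, (e j / E) * (1 + u) := by
                      apply Finset.sum_le_sum
                      intro j _
                      exact mul_le_mul_of_nonneg_left (hzu j) (div_nonneg (he j) hE0)
                  _ = 1 + u := by
                      rw [← Finset.sum_mul, ← Finset.sum_div, div_self hEz, one_mul]
              · exact hE0
      have hfinal : b / a ≤ 1 + E * Real.exp E * u :=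
        le_trans hratle (rpow_one_add_aux hE0 hu0 hu1)
      have hb_le : b ≤ a + a * (E * Real.exp E * u) := by
        rw [div_le_iff₀ ha] at hfinal
        nlinarith
      have : a * (E * Real.exp E * u) ≤ E * Real.exp E * δ := by
        rw [hu]
        have h1 : a / b ≤ 1 := div_le_one_of_le₀ hab hb0.le
        have h2 : 0 ≤ E * Real.exp E := by positivity
        calc a * (E * Real.exp E * (δ / b)) = (a / b) * (E * Real.exp E * δ) := by ring
          _ ≤ 1 * (E * Real.exp E * δ) := by
              apply mul_le_mul_of_nonneg_right h1 (by positivity)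
          _ = E * Real.exp E * δ := one_mul _
      nlinarith


section Phi
variable {ι : Type*} [Fintype ι] (κ : ι → ℕ) (m : ℕ) (t : ℝ)

noncomputable def phiFun (x : ι → ℝ) : ℝ :=
  (t * ∏ j, (x j) ^ (-(κ j : ℝ))) ^ ((m : ℝ)⁻¹)

lemma phi_pos (ht : 0 < t) {x : ι → ℝ} (hx : ∀ j, 0 < x j) : 0 < phiFun κ m t x := by
  apply Real.rpow_pos_of_pos
  apply mul_pos ht
  exact Finset.prod_pos fun j _ => Real.rpow_pos_of_pos (hx j) _

lemma phi_ratio (ht : 0 < t) {x x' : ι → ℝ} (hx : ∀ j, 0 < x j) (hx' : ∀ j, 0 < x' j) :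
    phiFun κ m t x' / phiFun κ m t x = ∏ j, (x j / x' j) ^ ((κ j : ℝ) * (m : ℝ)⁻¹) := by
  have hP : ∀ {z : ι → ℝ}, (∀ j, 0 < z j) → 0 < ∏ j, (z j) ^ (-(κ j : ℝ)) :=
    fun hz => Finset.prod_pos fun j _ => Real.rpow_pos_of_pos (hz j) _
  have h1 : phiFun κ m t x' / phiFun κ m t x
      = ((t * ∏ j, (x' j) ^ (-(κ j : ℝ))) / (t * ∏ j, (x j) ^ (-(κ j : ℝ)))) ^ ((m:ℝ)⁻¹) := by
    rw [Real.div_rpow (mul_pos ht (hP hx')).le (mul_pos ht (hP hx)).le]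
    rfl
  rw [h1, mul_div_mul_left _ _ ht.ne', ← Finset.prod_div_distrib]
  have h2 : ∀ j, (x' j) ^ (-(κ j : ℝ)) / (x j) ^ (-(κ j : ℝ)) = (x j / x' j) ^ ((κ j : ℝ)) := by
    intro j
    rw [Real.div_rpow (hx j).le (hx' j).le, Real.rpow_neg (hx' j).le, Real.rpow_neg (hx j).le]
    field_simp
  rw [Finset.prod_congr rfl fun j _ => h2 j]
  rw [← Real.finset_prod_rpow _ _ (fun j _ => Real.rpow_nonneg (div_nonneg (hx j).le (hx' j).le) _) _]
  exact Finset.prod_congr rfl fun j _ => by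
    rw [← Real.rpow_mul (div_nonneg (hx j).le (hx' j).le)]

/-- Lipschitz-type estimate for `phiFun` on the region where `phiFun ≤` every coordinate. -/
lemma phi_lip (ht : 0 < t) {x x' : ι → ℝ} (hx : ∀ j, 0 < x j) (hx' : ∀ j, 0 < x' j)
    (hbx : ∀ j, phiFun κ m t x ≤ x j) (hbx' : ∀ j, phiFun κ m t x' ≤ x' j)
    {δ : ℝ} (hδ : ∀ j, |x j - x' j| ≤ δ) (hδ0 : 0 ≤ δ) :
    |phiFun κ m t x - phiFun κ m t x'|
      ≤ (1 + (∑ j, (κ j : ℝ) * (m : ℝ)⁻¹) * Real.exp (∑ j, (κ j : ℝ) * (m : ℝ)⁻¹)) * δ := by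
  set e : ι → ℝ := fun j => (κ j : ℝ) * (m : ℝ)⁻¹ with he
  have hen : ∀ j, 0 ≤ e j := fun j => by positivity
  rcases le_total (phiFun κ m t x) (phiFun κ m t x') with h | h
  · rw [abs_of_nonpos (by linarith)]
    have := key_half e hen x x' hx hx' (phi_pos κ m t ht hx) h
      (phi_ratio κ m t ht hx hx') hbx' hδ hδ0
    linarith
  · rw [abs_of_nonneg (by linarith)]
    have hδ' : ∀ j, |x' j - x j| ≤ δ := fun j => by rw [abs_sub_comm]; exact hδ j
    have := key_half e hen x' x hx' hx (phi_pos κ m t ht hx') h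
      (phi_ratio κ m t ht hx' hx) hbx hδ' hδ0
    linarith

end Phi


section Charts
variable (n : ℕ) (k : Fin n → ℕ) (t : ℝ) (i : Fin n)

noncomputable def chartPhi (x : EuclideanSpace ℝ {j : Fin n // j ≠ i}) : ℝ :=
  phiFun (fun j => k j.1) (k i) t x

noncomputable def chartG (x : EuclideanSpace ℝ {j : Fin n // j ≠ i}) :
    EuclideanSpace ℝ (Fin n) :=
  WithLp.toLp 2 (fun j => if h : j = i then chartPhi n k t i x else x ⟨j, h⟩)

def chartD : Set (EuclideanSpace ℝ {j : Fin n // j ≠ i}) :=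
  {x | (∀ j, 0 < x j ∧ x j < 1) ∧ ∀ j, chartPhi n k t i x ≤ x j}

end Charts

lemma chart_cover (n : ℕ) (hn : 1 ≤ n) (k : Fin n → ℕ) (hk : ∀ i, 1 ≤ k i)
    (t : ℝ) (ht : 0 < t) :
    {y : EuclideanSpace ℝ (Fin n) |
        (∏ i, y i ^ k i) = t ∧ ∀ i, y i ∈ Set.Ioo (0:ℝ) 1}
      ⊆ ⋃ i, chartG n k t i '' chartD n k t i := by
  classical
  intro y hy
  obtain ⟨hyt, hy01⟩ := hy
  obtain ⟨i, -, hmin⟩ := Finset.exists_min_image Finset.univ y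
    ⟨⟨0, by omega⟩, Finset.mem_univ _⟩
  set x : EuclideanSpace ℝ {j : Fin n // j ≠ i} := WithLp.toLp 2 (fun j => y j.1) with hxdef
  have hyi : 0 < y i := (hy01 i).1
  -- the product over the complement subtype
  have hQpos : 0 < ∏ j : {j : Fin n // j ≠ i}, y j.1 ^ k j.1 :=
    Finset.prod_pos fun j _ => pow_pos (hy01 j.1).1 _
  have hsub : ∏ j : {j : Fin n // j ≠ i}, y j.1 ^ k j.1
      = ∏ j ∈ Finset.univ.erase i, y j ^ k j :=
    by
    symm
    apply Finset.prod_subtype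
    intro j; simp
  have hsplit : y i ^ k i * ∏ j : {j : Fin n // j ≠ i}, y j.1 ^ k j.1 = t := by
    rw [hsub, ← hyt]
    exact Finset.mul_prod_erase Finset.univ (fun j => y j ^ k j) (Finset.mem_univ i)
  have hkey : chartPhi n k t i x = y i := by
    have hP : ∏ j : {j : Fin n // j ≠ i}, (x j) ^ (-(k j.1 : ℝ))
        = (∏ j : {j : Fin n // j ≠ i}, y j.1 ^ k j.1)⁻¹ := by
      rw [← Finset.prod_inv_distrib]
      refine Finset.prod_congr rfl fun j _ => ?_
      rw [hxdef]
      rw [Real.rpow_neg (hy01 j.1).1.le, Real.rpow_natCast]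
    have ht' : t * ∏ j : {j : Fin n // j ≠ i}, (x j) ^ (-(k j.1 : ℝ)) = y i ^ k i := by
      rw [hP, ← hsplit]
      field_simp
    rw [chartPhi, phiFun, ht', ← Real.rpow_natCast (y i) (k i),
      ← Real.rpow_mul hyi.le, mul_inv_cancel₀ (Nat.cast_ne_zero.2 (Nat.one_le_iff_ne_zero.1 (hk i))), Real.rpow_one]
  have hxD : x ∈ chartD n k t i := by
    constructor
    · exact fun j => ⟨(hy01 j.1).1, (hy01 j.1).2⟩
    · intro j
      rw [hkey]
      exact hmin j.1 (Finset.mem_univ _)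
  refine Set.mem_iUnion.2 ⟨i, ⟨x, hxD, ?_⟩⟩
  ext j
  by_cases h : j = i
  · subst h; simp [chartG, hkey]
  · simp [chartG, h, hxdef]


lemma eucl_coord_le {ι : Type*} [Fintype ι] (x y : EuclideanSpace ℝ ι) (j : ι) :
    dist (x j) (y j) ≤ dist x y := by
  rw [EuclideanSpace.dist_eq]
  calc dist (x j) (y j) = √(dist (x j) (y j) ^ 2) := (Real.sqrt_sq dist_nonneg).symm
    _ ≤ √(∑ i, dist (x i) (y i) ^ 2) := by
        apply Real.sqrt_le_sqrt
        exact Finset.single_le_sum (f := fun i => dist (x i) (y i) ^ 2) (fun _ _ => sq_nonneg _) (Finset.mem_univ j)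

/-- If every coordinate of `f` is `M`-Lipschitz (w.r.t. the distance on the source),
then `f` into Euclidean space is `n*M`-Lipschitz. -/
lemma eucl_lip_of_coords {α : Type*} [PseudoMetricSpace α] {n : ℕ} (hn : 1 ≤ n)
    {f : α → EuclideanSpace ℝ (Fin n)} {s : Set α} {M : ℝ} (hM : 0 ≤ M)
    (h : ∀ x ∈ s, ∀ y ∈ s, ∀ j, dist (f x j) (f y j) ≤ M * dist x y) :
    LipschitzOnWith (Real.toNNReal ((n : ℝ) * M)) f s := by
  apply LipschitzOnWith.of_dist_le_mul
  intro x hx y hy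
  have hMd : 0 ≤ M * dist x y := mul_nonneg hM dist_nonneg
  rw [Real.coe_toNNReal _ (by positivity)]
  rw [EuclideanSpace.dist_eq]
  calc √(∑ j, dist (f x j) (f y j) ^ 2)
      ≤ √(∑ _j : Fin n, (M * dist x y) ^ 2) := by
        apply Real.sqrt_le_sqrt
        apply Finset.sum_le_sum
        intro j _
        have := h x hx y hy j
        have hd0 : (0:ℝ) ≤ dist (f x j) (f y j) := dist_nonneg
        nlinarith
    _ = √((n : ℝ)) * (M * dist x y) := by
        rw [Finset.sum_const, Finset.card_univ, Fintype.card_fin, nsmul_eq_mul,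
          Real.sqrt_mul (by positivity), Real.sqrt_sq hMd]
    _ ≤ (n : ℝ) * (M * dist x y) := by
        apply mul_le_mul_of_nonneg_right _ hMd
        calc √((n:ℝ)) ≤ √(((n:ℝ))^2) := by
              apply Real.sqrt_le_sqrt
              have h1 : (1:ℝ) ≤ (n:ℝ) := by exact_mod_cast hn
              nlinarith
          _ = (n:ℝ) := Real.sqrt_sq (by positivity)
    _ = (n : ℝ) * M * dist x y := by ring
lemma chartG_lip (n : ℕ) (hn : 1 ≤ n) (k : Fin n → ℕ) (hk : ∀ i, 1 ≤ k i)
    (t : ℝ) (ht : 0 < t) (i : Fin n) :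
    LipschitzOnWith
      (Real.toNNReal ((n:ℝ) * (1 + (∑ j, (k j : ℝ)) * Real.exp (∑ j, (k j : ℝ)))))
      (chartG n k t i) (chartD n k t i) := by
  classical
  set S : ℝ := ∑ j, (k j : ℝ) with hS
  have hS0 : 0 ≤ S := Finset.sum_nonneg fun j _ => by positivity
  set Cφ : ℝ := 1 + S * Real.exp S with hCφ
  have hCφ1 : 1 ≤ Cφ := by nlinarith [Real.exp_pos S]
  apply eucl_lip_of_coords hn (by linarith)
  intro x hx x' hx' j
  obtain ⟨hx01, hxφ⟩ := hx
  obtain ⟨hx01', hxφ'⟩ := hx'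
  have hδ0 : 0 ≤ dist x x' := dist_nonneg
  have hδc : ∀ j', |x j' - x' j'| ≤ dist x x' := by
    intro j'
    rw [← Real.dist_eq]
    exact eucl_coord_le x x' j'
  by_cases h : j = i
  · subst h
    have hGx : chartG n k t j x j = chartPhi n k t j x := by simp [chartG]
    have hGx' : chartG n k t j x' j = chartPhi n k t j x' := by simp [chartG]
    rw [hGx, hGx', Real.dist_eq]
    -- exponent sum for this chart
    set E : ℝ := ∑ j' : {l : Fin n // l ≠ j}, (k j'.1 : ℝ) * (k j : ℝ)⁻¹ with hE
    have hE0 : 0 ≤ E := Finset.sum_nonneg fun j' _ => by positivity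
    have hES : E ≤ S := by
      have h1 : ∀ j' : {l : Fin n // l ≠ j}, (k j'.1 : ℝ) * (k j : ℝ)⁻¹ ≤ (k j'.1 : ℝ) := by
        intro j'
        apply mul_le_of_le_one_right (by positivity)
        apply inv_le_one_of_one_le₀
        exact_mod_cast hk j
      have h2 : E ≤ ∑ j' : {l : Fin n // l ≠ j}, (k j'.1 : ℝ) :=
        Finset.sum_le_sum fun j' _ => h1 j'
      have h3 : ∑ j' : {l : Fin n // l ≠ j}, (k j'.1 : ℝ)
          = ∑ j' ∈ Finset.univ.erase j, (k j' : ℝ) := by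
        symm
        apply Finset.sum_subtype
        intro l; simp
      have h4 : ∑ j' ∈ Finset.univ.erase j, (k j' : ℝ) ≤ S := by
        rw [hS]
        apply Finset.sum_le_sum_of_subset_of_nonneg (Finset.erase_subset _ _)
        intro l _ _; positivity
      linarith
    have hmono : 1 + E * Real.exp E ≤ Cφ := by
      have := Real.exp_le_exp.2 hES
      rw [hCφ]
      nlinarith [Real.exp_pos E]
    have hlip := phi_lip (fun j' : {l : Fin n // l ≠ j} => k j'.1) (k j) t ht
      (fun j' => (hx01 j').1) (fun j' => (hx01' j').1) hxφ hxφ' hδc hδ0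
    calc |chartPhi n k t j x - chartPhi n k t j x'|
        ≤ (1 + E * Real.exp E) * dist x x' := hlip
      _ ≤ Cφ * dist x x' := mul_le_mul_of_nonneg_right hmono hδ0
  · have hGx : chartG n k t i x j = x ⟨j, h⟩ := by simp [chartG, h]
    have hGx' : chartG n k t i x' j = x' ⟨j, h⟩ := by simp [chartG, h]
    rw [hGx, hGx', Real.dist_eq]
    calc |x ⟨j,h⟩ - x' ⟨j,h⟩| ≤ dist x x' := hδc _
      _ ≤ Cφ * dist x x' := by nlinarith
lemma eucl_hm_le {ι : Type*} [Fintype ι] (s : Set (EuclideanSpace ℝ ι)) {d : ℝ} (hd : 0 ≤ d) :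
    μH[d] s ≤ ((((Fintype.card ι : ℝ≥0) ^ ((1/(2:ℝ≥0∞)).toReal) : ℝ≥0)) : ℝ≥0∞) ^ d
      * μH[d] ((WithLp.equiv 2 (∀ _ : ι, ℝ)) '' s) := by
  have hanti := PiLp.antilipschitzWith_ofLp 2 (fun _ : ι => ℝ)
  have hlip : LipschitzWith ((Fintype.card ι : ℝ≥0) ^ ((1/(2:ℝ≥0∞)).toReal))
      ((WithLp.equiv 2 (∀ _ : ι, ℝ)).symm) := fun x y => by
    simpa using hanti ((WithLp.equiv 2 _).symm x) ((WithLp.equiv 2 _).symm y)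
  have himg : (WithLp.equiv 2 (∀ _ : ι, ℝ)).symm '' ((WithLp.equiv 2 (∀ _ : ι, ℝ)) '' s) = s :=
    Equiv.symm_image_image _ s
  calc μH[d] s
      = μH[d] ((WithLp.equiv 2 (∀ _ : ι, ℝ)).symm '' ((WithLp.equiv 2 (∀ _ : ι, ℝ)) '' s)) := by
        rw [himg]
    _ ≤ _ := hlip.hausdorffMeasure_image_le hd _
/-- There is a constant `C` depending only on `k₁,…,kₙ` such that for all sufficiently small
`t > 0`, the `(n-1)`-dimensional Hausdorff measure of
`Aⁿ(t) = { y ∈ ℝⁿ : ∏ᵢ yᵢ^{kᵢ} = t, 0 < yᵢ < 1 }` is at most `C`. -/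
theorem stmt5 (n : ℕ) (hn : 1 ≤ n) (k : Fin n → ℕ) (hk : ∀ i, 1 ≤ k i) :
    ∃ C > (0:ℝ), ∃ t₀ > (0:ℝ), ∀ t ∈ Set.Ioo (0:ℝ) t₀,
      μH[(n:ℝ) - 1]
        ({y : EuclideanSpace ℝ (Fin n) |
            (∏ i, y i ^ k i) = t ∧ ∀ i, y i ∈ Set.Ioo (0:ℝ) 1})
        ≤ ENNReal.ofReal C := by
  classical
  set S : ℝ := ∑ j, (k j : ℝ) with hS
  set L : ℝ≥0 := Real.toNNReal ((n:ℝ) * (1 + S * Real.exp S)) with hL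
  set Km : ℝ≥0 := ((n - 1 : ℕ) : ℝ≥0) ^ ((1/(2:ℝ≥0∞)).toReal) with hKm
  set Cnn : ℝ≥0 := (n : ℝ≥0) * (L * Km) ^ (n - 1) + 1 with hCnn
  have hCnnpos : 0 < Cnn := by
    rw [hCnn]
    exact lt_of_lt_of_le zero_lt_one le_add_self
  refine ⟨(Cnn : ℝ), by exact_mod_cast hCnnpos, 1, one_pos, ?_⟩
  intro t ht
  have ht0 : 0 < t := ht.1
  have hd0 : (0:ℝ) ≤ (n:ℝ) - 1 := by
    have : (1:ℝ) ≤ (n:ℝ) := by exact_mod_cast hn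
    linarith
  have hdcast : (n:ℝ) - 1 = ((n - 1 : ℕ) : ℝ) := by
    rw [Nat.cast_sub hn, Nat.cast_one]
  -- per chart bound
  have hchart : ∀ i : Fin n,
      μH[(n:ℝ) - 1] (chartG n k t i '' chartD n k t i)
        ≤ ((L * Km : ℝ≥0) : ℝ≥0∞) ^ ((n:ℝ) - 1) := by
    intro i
    have hcard : Fintype.card {j : Fin n // j ≠ i} = n - 1 := by
      simp [Fintype.card_subtype_compl]
    have h1 : μH[(n:ℝ) - 1] (chartG n k t i '' chartD n k t i)
        ≤ (L : ℝ≥0∞) ^ ((n:ℝ) - 1) * μH[(n:ℝ) - 1] (chartD n k t i) :=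
      (chartG_lip n hn k hk t ht0 i).hausdorffMeasure_image_le hd0
    have h2 : μH[(n:ℝ) - 1] (chartD n k t i)
        ≤ (Km : ℝ≥0∞) ^ ((n:ℝ) - 1)
          * μH[(n:ℝ) - 1] ((WithLp.equiv 2 (∀ _ : {j : Fin n // j ≠ i}, ℝ)) ''
              (chartD n k t i)) := by
      have := eucl_hm_le (chartD n k t i) hd0
      rwa [hcard] at this
    have h3 : μH[(n:ℝ) - 1] ((WithLp.equiv 2 (∀ _ : {j : Fin n // j ≠ i}, ℝ)) ''
        (chartD n k t i)) ≤ 1 := by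
      have heq : μH[(n:ℝ) - 1]
            ((WithLp.equiv 2 (∀ _ : {j : Fin n // j ≠ i}, ℝ)) '' (chartD n k t i))
          = volume ((WithLp.equiv 2 (∀ _ : {j : Fin n // j ≠ i}, ℝ)) '' (chartD n k t i)) := by
        rw [hdcast, ← hcard, hausdorffMeasure_pi_real]
      rw [heq]
      have hsub : (WithLp.equiv 2 (∀ _ : {j : Fin n // j ≠ i}, ℝ)) '' (chartD n k t i)
          ⊆ Set.univ.pi (fun _ : {j : Fin n // j ≠ i} => Set.Icc (0:ℝ) 1) := by
        rintro _ ⟨x, hxD, rfl⟩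
        intro j _
        exact ⟨(hxD.1 j).1.le, (hxD.1 j).2.le⟩
      calc volume ((WithLp.equiv 2 (∀ _ : {j : Fin n // j ≠ i}, ℝ)) '' (chartD n k t i))
          ≤ volume (Set.univ.pi (fun _ : {j : Fin n // j ≠ i} => Set.Icc (0:ℝ) 1)) :=
            measure_mono hsub
        _ = 1 := by
            rw [volume_pi_pi]
            simp [Real.volume_Icc]
    calc μH[(n:ℝ) - 1] (chartG n k t i '' chartD n k t i)
        ≤ (L : ℝ≥0∞) ^ ((n:ℝ) - 1) * ((Km : ℝ≥0∞) ^ ((n:ℝ) - 1) * 1) := by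
          refine le_trans h1 ?_
          apply mul_le_mul_right
          exact le_trans h2 (mul_le_mul_right h3 _)
      _ = ((L * Km : ℝ≥0) : ℝ≥0∞) ^ ((n:ℝ) - 1) := by
          rw [mul_one, ENNReal.coe_mul, ENNReal.mul_rpow_of_nonneg _ _ hd0]
  -- assemble
  calc μH[(n:ℝ) - 1] {y : EuclideanSpace ℝ (Fin n) |
            (∏ i, y i ^ k i) = t ∧ ∀ i, y i ∈ Set.Ioo (0:ℝ) 1}
      ≤ μH[(n:ℝ) - 1] (⋃ i, chartG n k t i '' chartD n k t i) :=
        measure_mono (chart_cover n hn k hk t ht0)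
    _ ≤ ∑' i : Fin n, μH[(n:ℝ) - 1] (chartG n k t i '' chartD n k t i) :=
        measure_iUnion_le _
    _ ≤ ∑' _i : Fin n, ((L * Km : ℝ≥0) : ℝ≥0∞) ^ ((n:ℝ) - 1) :=
        ENNReal.tsum_le_tsum fun i => hchart i
    _ = (n : ℝ≥0∞) * ((L * Km : ℝ≥0) : ℝ≥0∞) ^ ((n:ℝ) - 1) := by
        rw [tsum_fintype]
        simp [Finset.sum_const, Fintype.card_fin, nsmul_eq_mul]
    _ ≤ ENNReal.ofReal (Cnn : ℝ) := by
        rw [ENNReal.ofReal_coe_nnreal]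
        have h1 : (n : ℝ≥0∞) * ((L * Km : ℝ≥0) : ℝ≥0∞) ^ ((n:ℝ) - 1)
            = ((((n : ℝ≥0) * (L * Km) ^ (n - 1)) : ℝ≥0) : ℝ≥0∞) := by
          rw [hdcast, ENNReal.rpow_natCast, ← ENNReal.coe_pow, ← ENNReal.coe_natCast,
            ← ENNReal.coe_mul]
        rw [h1, hCnn]
        exact ENNReal.coe_le_coe.2 (le_add_right le_rfl)
end

section
/- For n = 2 and positive integers k₁, k₂, the 1-dimensional Hausdorff measure (length) of the curve { (y₁,y₂) ∈ (0,1)² : y₁^{k₁} y₂^{k₂} = t } is bounded above by a constant depending only on k₁, k₂, uniformly for all small t > 0. -/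
open MeasureTheory
open scoped NNReal ENNReal

/-- The "lower half" of the level curve (where `y₂ ≤ y₁`) has length at most `1 + k₁/k₂`. -/
lemma stmt6_aux (k₁ k₂ : ℕ) (hk₁ : 1 ≤ k₁) (hk₂ : 1 ≤ k₂) (t : ℝ) (ht : t ∈ Set.Ioo (0:ℝ) 1) :
    μH[(1:ℝ)]
      ({p : ℝ × ℝ | p.1 ^ k₁ * p.2 ^ k₂ = t ∧
          p.1 ∈ Set.Ioo (0:ℝ) 1 ∧ p.2 ∈ Set.Ioo (0:ℝ) 1 ∧ p.2 ≤ p.1})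
      ≤ ENNReal.ofReal (1 + (k₁:ℝ)/k₂) := by
  obtain ⟨ht0, ht1⟩ := ht
  have hk₁0 : (0:ℝ) < k₁ := by exact_mod_cast hk₁
  have hk₂0 : (0:ℝ) < k₂ := by exact_mod_cast hk₂
  have hk₂ne : k₂ ≠ 0 := by omega
  set m : ℕ := k₁ + k₂ with hm
  have hmne : m ≠ 0 := by omega
  have hm0 : (0:ℝ) < m := by positivity
  set s : ℝ := t ^ ((m:ℝ)⁻¹) with hs
  have hs0 : 0 < s := Real.rpow_pos_of_pos ht0 _
  set c : ℝ := t ^ ((k₂:ℝ)⁻¹) with hc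
  have hc0 : 0 < c := Real.rpow_pos_of_pos ht0 _
  set r : ℝ := -((k₁:ℝ)/k₂) with hr
  set g : ℝ → ℝ := fun x => c * x ^ r with hg
  -- g s = s
  have hgs : g s = s := by
    have h : c * s ^ r = s := by
      rw [hs, hc, ← Real.rpow_mul ht0.le, ← Real.rpow_add ht0]
      congr 1
      rw [hr, hm]
      push_cast
      field_simp
      ring
    simpa [hg] using h
  -- g x ≤ x on [s, 1]
  have hgle : ∀ x ∈ Set.Icc s 1, g x ≤ x := by
    intro x hx
    have hx0 : 0 < x := lt_of_lt_of_le hs0 hx.1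
    have hrle : r ≤ 0 := by rw [hr, neg_nonpos]; positivity
    have : g x ≤ g s := by
      rw [hg]
      exact mul_le_mul_of_nonneg_left
        (Real.rpow_le_rpow_of_nonpos hs0 hx.1 hrle) hc0.le
    calc g x ≤ g s := this
      _ = s := hgs
      _ ≤ x := hx.1
  -- Lipschitz constant for g
  set K : ℝ≥0 := (k₁ : ℝ≥0) / (k₂ : ℝ≥0) with hK
  have hKcoe : (K : ℝ) = (k₁:ℝ)/k₂ := by
    rw [hK]; push_cast; ring
  have hglip : LipschitzOnWith K g (Set.Icc s 1) := by
    apply (convex_Icc s 1).lipschitzOnWith_of_nnnorm_hasDerivWithin_le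
      (f' := fun x => c * (r * x ^ (r - 1)))
    · intro x hx
      have hx0 : (0:ℝ) < x := lt_of_lt_of_le hs0 hx.1
      exact ((Real.hasDerivAt_rpow_const (Or.inl hx0.ne')).const_mul c).hasDerivWithinAt
    · intro x hx
      have hx0 : (0:ℝ) < x := lt_of_lt_of_le hs0 hx.1
      rw [← NNReal.coe_le_coe, coe_nnnorm, Real.norm_eq_abs, hKcoe]
      have h1 : |c * (r * x ^ (r - 1))| = ((k₁:ℝ)/k₂) * (c * x ^ (r-1)) := by
        rw [abs_mul, abs_mul, abs_of_pos hc0, abs_of_pos (Real.rpow_pos_of_pos hx0 _),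
          hr, abs_neg, abs_of_pos (by positivity)]
        ring
      rw [h1]
      have h2 : c * x ^ (r - 1) ≤ 1 := by
        have : c * x ^ (r - 1) = g x / x := by
          rw [hg, Real.rpow_sub hx0, Real.rpow_one]
          ring
        rw [this, div_le_one hx0]
        exact hgle x hx
      calc ((k₁:ℝ)/k₂) * (c * x ^ (r-1)) ≤ ((k₁:ℝ)/k₂) * 1 :=
            mul_le_mul_of_nonneg_left h2 (by positivity)
        _ = (k₁:ℝ)/k₂ := mul_one _
  -- the pairing map
  have hflip : LipschitzOnWith (max 1 K) (fun x : ℝ => (x, g x)) (Set.Icc s 1) :=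
    (LipschitzWith.id.lipschitzOnWith (s := Set.Icc s 1)).prodMk hglip
  -- inclusion of the set in the image
  have hsub : {p : ℝ × ℝ | p.1 ^ k₁ * p.2 ^ k₂ = t ∧
      p.1 ∈ Set.Ioo (0:ℝ) 1 ∧ p.2 ∈ Set.Ioo (0:ℝ) 1 ∧ p.2 ≤ p.1}
      ⊆ (fun x : ℝ => (x, g x)) '' Set.Icc s 1 := by
    rintro ⟨x, y⟩ ⟨hp, hx, hy, hle⟩
    simp only [Set.mem_setOf_eq] at hp hx hy
    have hx0 := hx.1
    have hy0 := hy.1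
    refine ⟨x, ⟨?_, hx.2.le⟩, ?_⟩
    · -- s ≤ x
      have h1 : t ≤ x ^ m := by
        rw [← hp, hm, pow_add]
        exact mul_le_mul_of_nonneg_left (pow_le_pow_left₀ hy0.le hle _) (by positivity)
      calc s = t ^ ((m:ℝ)⁻¹) := rfl
        _ ≤ (x ^ m) ^ ((m:ℝ)⁻¹) := Real.rpow_le_rpow ht0.le h1 (by positivity)
        _ = x := Real.pow_rpow_inv_natCast hx0.le hmne
    · -- (x, g x) = (x, y)
      have hyx : y = g x := by
        have h1 : y ^ k₂ = t * (x ^ k₁)⁻¹ := by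
          field_simp
          linarith [hp]
        have h2 : y = (y ^ k₂) ^ ((k₂:ℝ)⁻¹) := (Real.pow_rpow_inv_natCast hy0.le hk₂ne).symm
        rw [h2, h1, Real.mul_rpow ht0.le (by positivity), hg, hc]
        congr 1
        rw [← Real.rpow_natCast x k₁, ← Real.rpow_neg hx0.le, ← Real.rpow_mul hx0.le, hr]
        congr 1
        field_simp
      simp [hyx]
  -- put it together
  calc μH[(1:ℝ)] ({p : ℝ × ℝ | p.1 ^ k₁ * p.2 ^ k₂ = t ∧
        p.1 ∈ Set.Ioo (0:ℝ) 1 ∧ p.2 ∈ Set.Ioo (0:ℝ) 1 ∧ p.2 ≤ p.1})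
      ≤ μH[(1:ℝ)] ((fun x : ℝ => (x, g x)) '' Set.Icc s 1) := measure_mono hsub
    _ ≤ ((max 1 K : ℝ≥0) : ℝ≥0∞) ^ (1:ℝ) * μH[(1:ℝ)] (Set.Icc s 1) :=
        hflip.hausdorffMeasure_image_le zero_le_one
    _ ≤ ((max 1 K : ℝ≥0) : ℝ≥0∞) ^ (1:ℝ) * 1 := by
        gcongr
        rw [MeasureTheory.hausdorffMeasure_real, Real.volume_Icc]
        exact ENNReal.ofReal_le_one.mpr (by linarith)
    _ ≤ ENNReal.ofReal (1 + (k₁:ℝ)/k₂) := by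
        rw [mul_one, ENNReal.rpow_one]
        have : ENNReal.ofReal (1 + (k₁:ℝ)/k₂) = ((1 + K : ℝ≥0) : ℝ≥0∞) := by
          rw [← ENNReal.ofReal_coe_nnreal, NNReal.coe_add, NNReal.coe_one, hKcoe]
        rw [this]
        exact_mod_cast max_le (le_add_of_nonneg_right zero_le)
          (le_add_of_nonneg_left zero_le)

/-- For `n = 2` and positive integers `k₁, k₂`, the 1-dimensional Hausdorff measure (length)
of `{ (y₁,y₂) ∈ (0,1)² : y₁^{k₁} y₂^{k₂} = t }` is bounded by a constant depending only on
`k₁, k₂`, uniformly for all small `t > 0`. -/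
theorem stmt6 (k₁ k₂ : ℕ) (hk₁ : 1 ≤ k₁) (hk₂ : 1 ≤ k₂) :
    ∃ C > (0:ℝ), ∃ t₀ > (0:ℝ), ∀ t ∈ Set.Ioo (0:ℝ) t₀,
      μH[(1:ℝ)]
        ({p : ℝ × ℝ | p.1 ^ k₁ * p.2 ^ k₂ = t ∧
            p.1 ∈ Set.Ioo (0:ℝ) 1 ∧ p.2 ∈ Set.Ioo (0:ℝ) 1})
        ≤ ENNReal.ofReal C := by
  have hk₁0 : (0:ℝ) < k₁ := by exact_mod_cast hk₁
  have hk₂0 : (0:ℝ) < k₂ := by exact_mod_cast hk₂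
  refine ⟨(1 + (k₁:ℝ)/k₂) + (1 + (k₂:ℝ)/k₁), by positivity, 1, one_pos, fun t ht => ?_⟩
  set A : Set (ℝ × ℝ) := {p : ℝ × ℝ | p.1 ^ k₁ * p.2 ^ k₂ = t ∧
      p.1 ∈ Set.Ioo (0:ℝ) 1 ∧ p.2 ∈ Set.Ioo (0:ℝ) 1 ∧ p.2 ≤ p.1} with hA
  set B : Set (ℝ × ℝ) := {p : ℝ × ℝ | p.1 ^ k₂ * p.2 ^ k₁ = t ∧
      p.1 ∈ Set.Ioo (0:ℝ) 1 ∧ p.2 ∈ Set.Ioo (0:ℝ) 1 ∧ p.2 ≤ p.1} with hB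
  have hswap : Isometry (Prod.swap : ℝ × ℝ → ℝ × ℝ) := by
    intro p q
    simp only [Prod.edist_eq, Prod.fst_swap, Prod.snd_swap, max_comm]
  have hsub : {p : ℝ × ℝ | p.1 ^ k₁ * p.2 ^ k₂ = t ∧
      p.1 ∈ Set.Ioo (0:ℝ) 1 ∧ p.2 ∈ Set.Ioo (0:ℝ) 1} ⊆ A ∪ Prod.swap '' B := by
    rintro ⟨x, y⟩ ⟨hp, hx, hy⟩
    rcases le_total y x with h | h
    · exact Or.inl ⟨hp, hx, hy, h⟩
    · refine Or.inr ⟨(y, x), ⟨?_, hy, hx, h⟩, rfl⟩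
      simp only [Set.mem_setOf_eq] at hp ⊢
      linarith [hp, mul_comm (x ^ k₁) (y ^ k₂)]
  calc μH[(1:ℝ)] ({p : ℝ × ℝ | p.1 ^ k₁ * p.2 ^ k₂ = t ∧
        p.1 ∈ Set.Ioo (0:ℝ) 1 ∧ p.2 ∈ Set.Ioo (0:ℝ) 1})
      ≤ μH[(1:ℝ)] (A ∪ Prod.swap '' B) := measure_mono hsub
    _ ≤ μH[(1:ℝ)] A + μH[(1:ℝ)] (Prod.swap '' B) := measure_union_le _ _
    _ = μH[(1:ℝ)] A + μH[(1:ℝ)] B := by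
        rw [hswap.hausdorffMeasure_image (Or.inl zero_le_one)]
    _ ≤ ENNReal.ofReal (1 + (k₁:ℝ)/k₂) + ENNReal.ofReal (1 + (k₂:ℝ)/k₁) := by
        gcongr
        · exact stmt6_aux k₁ k₂ hk₁ hk₂ t ht
        · exact stmt6_aux k₂ k₁ hk₂ hk₁ t ht
    _ = ENNReal.ofReal ((1 + (k₁:ℝ)/k₂) + (1 + (k₂:ℝ)/k₁)) :=
        (ENNReal.ofReal_add (by positivity) (by positivity)).symm
end

section
/- If g(x) = ∇f(x)/(f(x)·(ln|f(x)|)²) on U \ f⁻¹(0), and f is Lipschitz with |f| < 1/2 and level sets of uniformly bounded (n−1)-Hausdorff measure near 0, then g is locally integrable on U. More precisely, ∫_U |g| dV ≤ ∫_{-1/2}^{1/2} m(f⁻¹(t)) / (|t| (ln|t|)²) dt, which is finite if m(f⁻¹(t)) ≤ C uniformly for |t| small. -/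
open MeasureTheory Set ENNReal NNReal RealInnerProductSpace


lemma det_id_add_smulRight {E : Type*} [NormedAddCommGroup E] [NormedSpace ℝ E]
    [FiniteDimensional ℝ E] (φ : E →L[ℝ] ℝ) (u : E) :
    (ContinuousLinearMap.id ℝ E + φ.smulRight u).det = 1 + φ u := by
  classical
  let b := Module.finBasis ℝ E
  have h0 : (ContinuousLinearMap.id ℝ E + φ.smulRight u).det
      = LinearMap.det ((ContinuousLinearMap.id ℝ E + φ.smulRight u) : E →ₗ[ℝ] E) := rfl
  rw [h0, ← LinearMap.det_toMatrix b]
  have hm : LinearMap.toMatrix b b ((ContinuousLinearMap.id ℝ E + φ.smulRight u) : E →ₗ[ℝ] E)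
      = 1 + Matrix.replicateCol (Fin 1) (fun i => b.repr u i) * Matrix.replicateRow (Fin 1) (fun j => φ (b j)) := by
    ext i j
    have happ : ((ContinuousLinearMap.id ℝ E + φ.smulRight u) : E →ₗ[ℝ] E) (b j)
        = b j + φ (b j) • u := by simp
    rw [LinearMap.toMatrix_apply, happ, map_add, _root_.map_smul]
    simp only [Finsupp.add_apply, Matrix.add_apply, Matrix.mul_apply, Matrix.replicateCol_apply,
      Matrix.replicateRow_apply, Finset.univ_unique, Finset.sum_singleton, Finsupp.smul_apply,
      smul_eq_mul]
    congr 1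
    · rw [b.repr_self_apply, Matrix.one_apply]
      simp [eq_comm]
    · ring
  rw [hm]
  erw [Matrix.det_one_add_replicateCol_mul_replicateRow]
  congr 1
  have h1 : ∑ j, φ (b j) * b.repr u j = φ (∑ j, b.repr u j • b j) := by
    rw [map_sum]
    exact Finset.sum_congr rfl fun j _ => by
      rw [_root_.map_smul, smul_eq_mul, mul_comm]
  simpa [dotProduct] using h1.trans (by rw [b.sum_repr u])


lemma finset_sum_lintegral_le {α : Type*} [MeasurableSpace α] (μ : Measure α) {ι : Type*}
    (J : Finset ι) (u : ι → α → ENNReal) :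
    ∑ j ∈ J, ∫⁻ t, u j t ∂μ ≤ ∫⁻ t, ∑ j ∈ J, u j t ∂μ := by
  classical
  induction J using Finset.induction_on with
  | empty => simp
  | insert a J' hnotmem ih =>
      rw [Finset.sum_insert hnotmem]
      refine le_trans (add_le_add_right ih _) ?_
      refine le_trans (MeasureTheory.le_lintegral_add _ _) ?_
      refine lintegral_mono fun t => ?_
      rw [Finset.sum_insert hnotmem]

lemma sum_measure_inter_le {α : Type*} [MeasurableSpace α] (μ : Measure α) {ι : Type*}
    (J : Finset ι) (q : ι → Set α) (hq : ∀ j, MeasurableSet (q j))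
    (hdisj : Pairwise (Function.onFun Disjoint q)) (X S : Set α) (hsub : ∀ j, q j ⊆ S) :
    ∑ j ∈ J, μ (X ∩ q j) ≤ μ (X ∩ S) := by
  classical
  have key : ∀ (J : Finset ι), ∑ j ∈ J, μ (X ∩ q j) = μ (X ∩ ⋃ j ∈ J, q j) := by
    intro J
    induction J using Finset.induction_on with
    | empty => simp
    | insert a J' hnotmem ih =>
        rw [Finset.sum_insert hnotmem, ih]
        have hQ : (⋃ j ∈ insert a J', q j) = q a ∪ ⋃ j ∈ J', q j := by
          simp [Set.biUnion_insert]
        rw [hQ]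
        have hdisj' : Disjoint (q a) (⋃ j ∈ J', q j) := by
          refine Set.disjoint_iUnion₂_right.2 fun j hj => hdisj ?_
          rintro rfl; exact hnotmem hj
        have := measure_inter_add_diff (μ := μ) (X ∩ (q a ∪ ⋃ j ∈ J', q j)) (hq a)
        have h1 : X ∩ (q a ∪ ⋃ j ∈ J', q j) ∩ q a = X ∩ q a := by
          ext x; constructor
          · rintro ⟨⟨hx, _⟩, hxa⟩; exact ⟨hx, hxa⟩
          · rintro ⟨hx, hxa⟩; exact ⟨⟨hx, Or.inl hxa⟩, hxa⟩
        have h2 : (X ∩ (q a ∪ ⋃ j ∈ J', q j)) \ q a = X ∩ ⋃ j ∈ J', q j := by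
          ext x; constructor
          · rintro ⟨⟨hx, hor⟩, hxa⟩
            rcases hor with h | h
            · exact absurd h hxa
            · exact ⟨hx, h⟩
          · rintro ⟨hx, hxu⟩
            exact ⟨⟨hx, Or.inr hxu⟩, fun hxa => (hdisj'.le_bot ⟨hxa, hxu⟩)⟩
        rw [h1, h2] at this
        exact this
  rw [key J]
  exact measure_mono (Set.inter_subset_inter_right _ (by
    simp only [Set.iUnion_subset_iff]; exact fun j _ => hsub j))


lemma coord_dist_le {N : ℕ} (x y : EuclideanSpace ℝ (Fin N)) (k : Fin N) :
    dist (x k) (y k) ≤ dist x y := by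
  rw [EuclideanSpace.dist_eq]
  have h1 : dist (x k) (y k) = Real.sqrt (dist (x k) (y k) ^ 2) := by
    rw [Real.sqrt_sq dist_nonneg]
  rw [h1]
  apply Real.sqrt_le_sqrt
  exact Finset.single_le_sum (f := fun i => dist (x i) (y i) ^ 2)
    (fun i _ => sq_nonneg _) (Finset.mem_univ k)

lemma slice_le {m : ℕ} (v : EuclideanSpace ℝ (Fin (m+1))) (hv : ‖v‖ = 1)
    (A : Set (EuclideanSpace ℝ (Fin (m+1)))) (hA : MeasurableSet A)
    (h : ℝ → ENNReal) (hh : Measurable h) :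
    ∫⁻ y in A, h ⟪v, y⟫ ≤ ∫⁻ t, h t * μH[(m:ℝ)] (A ∩ {y | ⟪v, y⟫ = t}) := by
  classical
  -- orthonormal basis with b 0 = v
  have hON : Orthonormal ℝ (Set.restrict {(0 : Fin (m+1))} (fun _ : Fin (m+1) => v)) := by
    constructor
    · intro i; exact hv
    · intro i j hij
      exfalso
      apply hij
      rcases i with ⟨i, hi⟩; rcases j with ⟨j, hj⟩
      simp only [Set.mem_singleton_iff] at hi hj
      exact Subtype.ext (hi.trans hj.symm)
  obtain ⟨b, hb⟩ := hON.exists_orthonormalBasis_extension_of_card_eq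
    (by simp) (v := fun _ : Fin (m+1) => v)
  have hb0 : b 0 = v := hb 0 rfl
  set e1 := b.repr with he1
  set e2 := (MeasurableEquiv.toLp 2 (Fin (m+1) → ℝ)).symm with he2
  set e3 := MeasurableEquiv.piFinSuccAbove (fun _ : Fin (m+1) => ℝ) 0 with he3
  set T : EuclideanSpace ℝ (Fin (m+1)) → ℝ × (Fin m → ℝ) := fun y => e3 (e2 (e1 y)) with hT
  have mpT : MeasurePreserving T volume volume := by
    have mp1 : MeasurePreserving e1 volume volume := e1.measurePreserving
    have mp2 : MeasurePreserving e2 volume volume :=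
      EuclideanSpace.volume_preserving_symm_measurableEquiv_toLp (Fin (m+1))
    have mp3 : MeasurePreserving e3 volume volume := by
      have := measurePreserving_piFinSuccAbove (fun _ : Fin (m+1) => (volume : Measure ℝ)) 0
      simpa [he3, ← volume_pi, ← Measure.volume_eq_prod] using this
    exact mp3.comp (mp2.comp mp1)
  have membT : MeasurableEmbedding T := by
    have m1 : MeasurableEmbedding (⇑e1) :=
      e1.toHomeomorph.measurableEmbedding
    exact (e3.measurableEmbedding.comp e2.measurableEmbedding).comp m1
  have hT1 : ∀ y, (T y).1 = ⟪v, y⟫ := by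
    intro y
    have : (T y).1 = (e2 (e1 y)) 0 := by
      simp [hT, he3, MeasurableEquiv.piFinSuccAbove_apply]
    rw [this]
    have : (e2 (e1 y)) 0 = e1 y 0 := rfl
    rw [this, he1, b.repr_apply_apply, hb0]
  have hTA : MeasurableSet (T '' A) := membT.measurableSet_image.2 hA
  have h1 : ∫⁻ y in A, h ⟪v, y⟫ = ∫⁻ p in T '' A, h p.1 := by
    rw [← MeasurePreserving.setLIntegral_comp_emb mpT membT (fun p => h p.1) A]
    exact setLIntegral_congr_fun hA (fun y _ => by rw [hT1 y])
  have h2 : ∫⁻ p in T '' A, h p.1 = ∫⁻ t, h t * volume (Prod.mk t ⁻¹' (T '' A)) := by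
    rw [← lintegral_indicator hTA]
    rw [Measure.volume_eq_prod]
    have hmeas : Measurable ((T '' A).indicator (fun q : ℝ × (Fin m → ℝ) => h q.1)) :=
      Measurable.indicator (by exact hh.comp measurable_fst) hTA
    rw [lintegral_prod _ hmeas.aemeasurable]
    congr 1
    ext t
    have : ∀ w, (T '' A).indicator (fun p => h p.1) (t, w)
        = (Prod.mk t ⁻¹' (T '' A)).indicator (fun _ => h t) w := by
      intro w
      by_cases hw : (t, w) ∈ T '' A
      · rw [Set.indicator_of_mem hw,
          Set.indicator_of_mem (show w ∈ Prod.mk t ⁻¹' (T '' A) from hw)]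
      · rw [Set.indicator_of_notMem hw,
          Set.indicator_of_notMem (show w ∉ Prod.mk t ⁻¹' (T '' A) from hw)]
    simp_rw [this]
    rw [lintegral_indicator (measurable_prodMk_left hTA), setLIntegral_const]
  rw [h1, h2]
  refine lintegral_mono fun t => ?_
  refine mul_le_mul_right ?_ (h t)
  -- slice bound
  set Q : EuclideanSpace ℝ (Fin (m+1)) → (Fin m → ℝ) := fun y => (T y).2 with hQ
  have hQs : Prod.mk t ⁻¹' (T '' A) = Q '' (A ∩ {y | ⟪v, y⟫ = t}) := by
    ext w
    constructor
    · rintro ⟨y, hyA, hTy⟩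
      refine ⟨y, ⟨hyA, ?_⟩, ?_⟩
      · simp only [Set.mem_setOf_eq]
        rw [← hT1 y, hTy]
      · rw [hQ]; simp only [hTy]
    · rintro ⟨y, ⟨hyA, hyt⟩, rfl⟩
      exact ⟨y, hyA, Prod.ext ((hT1 y).trans hyt) rfl⟩
  have hQlip : LipschitzWith 1 Q := by
    refine LipschitzWith.of_dist_le_mul fun y y' => ?_
    rw [NNReal.coe_one, one_mul]
    rw [dist_pi_le_iff dist_nonneg]
    intro j
    have happ : ∀ z, Q z j = e1 z ((0 : Fin (m+1)).succAbove j) := by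
      intro z
      simp only [hQ, hT, he3, MeasurableEquiv.piFinSuccAbove_apply]
      rfl
    rw [happ, happ]
    calc dist (e1 y ((0 : Fin (m+1)).succAbove j)) (e1 y' ((0 : Fin (m+1)).succAbove j))
        ≤ dist (e1 y) (e1 y') := coord_dist_le _ _ _
      _ = dist y y' := e1.dist_map y y'
  rw [hQs]
  have hvol : (volume : Measure (Fin m → ℝ)) (Q '' (A ∩ {y | ⟪v, y⟫ = t}))
      = μH[(m:ℝ)] (Q '' (A ∩ {y | ⟪v, y⟫ = t})) := by
    rw [← hausdorffMeasure_pi_real (ι := Fin m)]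
    norm_num
  rw [hvol]
  have := hQlip.hausdorffMeasure_image_le (d := (m:ℝ)) (by positivity) (A ∩ {y | ⟪v, y⟫ = t})
  simpa using this


noncomputable def rfun {E : Type*} [NormedAddCommGroup E] [NormedSpace ℝ E]
    [FiniteDimensional ℝ E] (A : E →L[ℝ] E) : ℝ≥0 :=
  if hA : A.det ≠ 0 then
    (2 * max 1 ‖((((A : E →ₗ[ℝ] E).equivOfDetNeZero hA).toContinuousLinearEquiv.symm :
      E ≃L[ℝ] E) : E →L[ℝ] E)‖₊)⁻¹
  else 1

lemma rfun_pos {E : Type*} [NormedAddCommGroup E] [NormedSpace ℝ E]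
    [FiniteDimensional ℝ E] (A : E →L[ℝ] E) : rfun A ≠ 0 := by
  rw [rfun]
  split_ifs with hA
  · refine inv_ne_zero (mul_ne_zero two_ne_zero ?_)
    intro hcon
    have : (1 : ℝ≥0) ≤ 0 := hcon ▸ le_max_left _ _
    simp at this
  · exact one_ne_zero

lemma rfun_lt {E : Type*} [NormedAddCommGroup E] [NormedSpace ℝ E]
    [FiniteDimensional ℝ E] (A : E →L[ℝ] E) (hA : A.det ≠ 0)
    (hM : ‖((((A : E →ₗ[ℝ] E).equivOfDetNeZero hA).toContinuousLinearEquiv.symm :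
      E ≃L[ℝ] E) : E →L[ℝ] E)‖₊ ≠ 0) :
    rfun A < ‖((((A : E →ₗ[ℝ] E).equivOfDetNeZero hA).toContinuousLinearEquiv.symm :
      E ≃L[ℝ] E) : E →L[ℝ] E)‖₊⁻¹ := by
  rw [rfun, dif_pos hA]
  set M := ‖((((A : E →ₗ[ℝ] E).equivOfDetNeZero hA).toContinuousLinearEquiv.symm :
      E ≃L[ℝ] E) : E →L[ℝ] E)‖₊
  have hlt : M < 2 * max 1 M := lt_of_le_of_lt (le_max_right 1 M)
    (lt_two_mul_self (lt_of_lt_of_le one_pos (le_max_left 1 M)))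
  exact NNReal.inv_lt_inv hM hlt

lemma cell_le {m : ℕ} (f : EuclideanSpace ℝ (Fin (m+1)) → ℝ)
    (v : EuclideanSpace ℝ (Fin (m+1))) (hv : ‖v‖ = 1)
    (d : Set (EuclideanSpace ℝ (Fin (m+1)))) (hd : MeasurableSet d)
    (hder : ∀ x ∈ d, HasFDerivAt f (fderiv ℝ f x) x)
    (hne : ∀ x ∈ d, fderiv ℝ f x v ≠ 0)
    (h : ℝ → ENNReal) (hh : Measurable h) :
    ∫⁻ x in d, ENNReal.ofReal |fderiv ℝ f x v| * h (f x)
      ≤ ∫⁻ t, h t * μH[(m:ℝ)] (f ⁻¹' {t} ∩ d) := by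
  classical
  rcases d.eq_empty_or_nonempty with rfl | hdne
  · simp
  set ψ : EuclideanSpace ℝ (Fin (m+1)) → EuclideanSpace ℝ (Fin (m+1)) :=
    fun x => x + (f x - ⟪v, x⟫) • v with hψ
  set B : EuclideanSpace ℝ (Fin (m+1)) →
      (EuclideanSpace ℝ (Fin (m+1)) →L[ℝ] EuclideanSpace ℝ (Fin (m+1))) :=
    fun x => ContinuousLinearMap.id ℝ (EuclideanSpace ℝ (Fin (m+1)))
      + ((fderiv ℝ f x) - innerSL ℝ v).smulRight v with hB
  have hvv : ⟪v, v⟫ = 1 := by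
    rw [real_inner_self_eq_norm_mul_norm, hv]; norm_num
  have hψder : ∀ x ∈ d, HasFDerivAt ψ (B x) x := by
    intro x hx
    have h1 : HasFDerivAt (fun y => f y - ⟪v, y⟫) (fderiv ℝ f x - innerSL ℝ v) x :=
      (hder x hx).sub ((innerSL ℝ v).hasFDerivAt)
    have h2 : HasFDerivAt (fun y => (f y - ⟪v, y⟫) • v)
        (((fderiv ℝ f x) - innerSL ℝ v).smulRight v) x := h1.smul_const v
    exact (hasFDerivAt_id x).add h2
  have hdet : ∀ x, (B x).det = fderiv ℝ f x v := by
    intro x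
    rw [hB]
    simp only
    rw [det_id_add_smulRight]
    simp only [ContinuousLinearMap.sub_apply, innerSL_apply_apply]
    rw [hvv]; ring_nf
  have hψv : ∀ x, ⟪v, ψ x⟫ = f x := by
    intro x
    rw [hψ]
    simp only [inner_add_right, real_inner_smul_right]
    rw [hvv]; ring
  obtain ⟨tt, A, htdisj, htmeas, htcover, htapprox, htA⟩ :=
    exists_partition_approximatesLinearOn_of_hasFDerivWithinAt ψ d B
      (fun x hx => (hψder x hx).hasFDerivWithinAt) rfun rfun_pos
  set p : ℕ → Set (EuclideanSpace ℝ (Fin (m+1))) := fun c => d ∩ tt c with hp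
  have hpm : ∀ c, MeasurableSet (p c) := fun c => hd.inter (htmeas c)
  have hpdisj : Pairwise (Function.onFun Disjoint p) := fun i j hij =>
    ((htdisj hij).mono inter_subset_right inter_subset_right)
  have hpsub : ∀ c, p c ⊆ d := fun c => inter_subset_left
  have key : ∀ c : ℕ, ∫⁻ x in p c, ENNReal.ofReal |fderiv ℝ f x v| * h (f x)
      ≤ ∫⁻ t, h t * μH[(m:ℝ)] (f ⁻¹' {t} ∩ p c) := by
    intro c
    obtain ⟨y, hy, hAc⟩ := htA hdne c
    have hdetc : (A c).det ≠ 0 := by rw [hAc, hdet y]; exact hne y hy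
    set Ec : EuclideanSpace ℝ (Fin (m+1)) ≃L[ℝ] EuclideanSpace ℝ (Fin (m+1)) :=
      ((A c : EuclideanSpace ℝ (Fin (m+1)) →ₗ[ℝ] EuclideanSpace ℝ (Fin (m+1))).equivOfDetNeZero
        hdetc).toContinuousLinearEquiv with hEcdef
    have hEc : ((Ec : EuclideanSpace ℝ (Fin (m+1)) ≃L[ℝ] EuclideanSpace ℝ (Fin (m+1))) :
        EuclideanSpace ℝ (Fin (m+1)) →L[ℝ] EuclideanSpace ℝ (Fin (m+1))) = A c := by
      ext x
      simp [hEcdef, LinearMap.equivOfDetNeZero]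
    have hMpos : ‖((Ec.symm : EuclideanSpace ℝ (Fin (m+1)) ≃L[ℝ] EuclideanSpace ℝ (Fin (m+1))) :
        EuclideanSpace ℝ (Fin (m+1)) →L[ℝ] EuclideanSpace ℝ (Fin (m+1)))‖₊ ≠ 0 := by
      intro hM
      have h0 : ‖((Ec.symm : EuclideanSpace ℝ (Fin (m+1)) ≃L[ℝ] EuclideanSpace ℝ (Fin (m+1))) :
          EuclideanSpace ℝ (Fin (m+1)) →L[ℝ] EuclideanSpace ℝ (Fin (m+1)))‖ = 0 := by
        simpa using congrArg (fun x : ℝ≥0 => (x : ℝ)) hM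
      have hz := (ContinuousLinearMap.opNorm_zero_iff _).1 h0
      have hids : EuclideanSpace.single (0 : Fin (m+1)) (1:ℝ) =
          Ec.symm (Ec (EuclideanSpace.single (0 : Fin (m+1)) (1:ℝ))) :=
        (Ec.symm_apply_apply _).symm
      have hzero : Ec.symm (Ec (EuclideanSpace.single (0 : Fin (m+1)) (1:ℝ))) = 0 := by
        have := congrFun (congrArg (fun (T : EuclideanSpace ℝ (Fin (m+1)) →L[ℝ]
          EuclideanSpace ℝ (Fin (m+1))) => (T : EuclideanSpace ℝ (Fin (m+1)) →
          EuclideanSpace ℝ (Fin (m+1)))) hz) (Ec (EuclideanSpace.single (0 : Fin (m+1)) (1:ℝ)))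
        simpa using this
      have hone : (1:ℝ) = 0 := by
        have := congrArg (fun z : EuclideanSpace ℝ (Fin (m+1)) => ‖z‖) (hids.trans hzero)
        simpa [EuclideanSpace.norm_single] using this
      norm_num at hone
    have hrbound := rfun_lt (A c) hdetc hMpos
    have happ : ApproximatesLinearOn ψ
        ((Ec : EuclideanSpace ℝ (Fin (m+1)) ≃L[ℝ] EuclideanSpace ℝ (Fin (m+1))) :
          EuclideanSpace ℝ (Fin (m+1)) →L[ℝ] EuclideanSpace ℝ (Fin (m+1))) (p c)
        (rfun (A c)) := by
      rw [hEc]; exact htapprox c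
    have hinj : InjOn ψ (p c) := happ.injOn (Or.inr hrbound)
    have hder' : ∀ x ∈ p c, HasFDerivWithinAt ψ (B x) (p c) x :=
      fun x hx => (hψder x hx.1).hasFDerivWithinAt
    have hcov := lintegral_image_eq_lintegral_abs_det_fderiv_mul volume (hpm c) hder' hinj
      (fun y => h ⟪v, y⟫)
    have himgmeas : MeasurableSet (ψ '' p c) :=
      measurable_image_of_fderivWithin (hpm c) hder' hinj
    have hstep1 : ∫⁻ x in p c, ENNReal.ofReal |fderiv ℝ f x v| * h (f x)
        = ∫⁻ y in ψ '' p c, h ⟪v, y⟫ := by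
      rw [hcov]
      congr 1
      funext x
      rw [hdet x, hψv x]
    rw [hstep1]
    refine le_trans (slice_le v hv (ψ '' p c) himgmeas h hh) ?_
    refine lintegral_mono fun t => ?_
    refine mul_le_mul_right ?_ (h t)
    have hseteq : ψ '' p c ∩ {y | ⟪v, y⟫ = t} = ψ '' (f ⁻¹' {t} ∩ p c) := by
      ext w
      constructor
      · rintro ⟨⟨x, hx, rfl⟩, hw⟩
        refine ⟨x, ⟨?_, hx⟩, rfl⟩
        simp only [Set.mem_preimage, Set.mem_singleton_iff]
        rw [← hψv x]
        exact hw
      · rintro ⟨x, ⟨hxt, hx⟩, rfl⟩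
        refine ⟨⟨x, hx, rfl⟩, ?_⟩
        simp only [Set.mem_setOf_eq, hψv x]
        simpa using hxt
    rw [hseteq]
    have hlip : LipschitzOnWith 1 ψ (f ⁻¹' {t} ∩ p c) := by
      rw [lipschitzOnWith_iff_dist_le_mul]
      intro x hx x' hx'
      rw [NNReal.coe_one, one_mul, dist_eq_norm, dist_eq_norm]
      have hfx : f x = t := hx.1
      have hfx' : f x' = t := hx'.1
      have hdiff : ψ x - ψ x' = (x - x') - ⟪v, x - x'⟫ • v := by
        rw [hψ]
        simp only
        rw [hfx, hfx', inner_sub_right]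
        module
      rw [hdiff]
      set z := x - x'
      have hnn : ‖z - ⟪v, z⟫ • v‖ ^ 2 = ‖z‖ ^ 2 - ⟪v, z⟫ ^ 2 := by
        rw [norm_sub_sq_real, real_inner_smul_right, norm_smul]
        rw [Real.norm_eq_abs, mul_pow, sq_abs, hv, real_inner_comm z v]
        ring
      have h1 : ‖z - ⟪v, z⟫ • v‖ ^ 2 ≤ ‖z‖ ^ 2 := by rw [hnn]; nlinarith [sq_nonneg ⟪v, z⟫]
      nlinarith [norm_nonneg (z - ⟪v, z⟫ • v), norm_nonneg z]
    have := hlip.hausdorffMeasure_image_le (d := (m:ℝ)) (by positivity)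
    simpa using this
  have hdun : d = ⋃ c, p c := by
    rw [hp, ← Set.inter_iUnion]
    exact (Set.inter_eq_left.2 htcover).symm
  calc ∫⁻ x in d, ENNReal.ofReal |fderiv ℝ f x v| * h (f x)
      = ∑' c, ∫⁻ x in p c, ENNReal.ofReal |fderiv ℝ f x v| * h (f x) := by
        rw [show (∫⁻ x in d, ENNReal.ofReal |fderiv ℝ f x v| * h (f x))
          = ∫⁻ x in ⋃ c, p c, ENNReal.ofReal |fderiv ℝ f x v| * h (f x) from by rw [← hdun]]
        exact lintegral_iUnion hpm hpdisj _
    _ ≤ ∑' c, ∫⁻ t, h t * μH[(m:ℝ)] (f ⁻¹' {t} ∩ p c) := ENNReal.tsum_le_tsum key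
    _ ≤ ∫⁻ t, h t * μH[(m:ℝ)] (f ⁻¹' {t} ∩ d) := by
        rw [ENNReal.tsum_eq_iSup_sum]
        refine iSup_le fun J => ?_
        refine le_trans (finset_sum_lintegral_le volume J _) ?_
        refine lintegral_mono fun t => ?_
        rw [← Finset.mul_sum]
        refine mul_le_mul_right ?_ (h t)
        exact sum_measure_inter_le _ J p hpm hpdisj _ d hpsub


lemma coarea_le {m : ℕ} (f : EuclideanSpace ℝ (Fin (m+1)) → ℝ) (hf : Continuous f)
    (s : Set (EuclideanSpace ℝ (Fin (m+1)))) (hs : MeasurableSet s)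
    (hder : ∀ x ∈ s, HasFDerivAt f (fderiv ℝ f x) x)
    (hne : ∀ x ∈ s, fderiv ℝ f x ≠ 0)
    (h : ℝ → ENNReal) (hh : Measurable h) :
    ∫⁻ x in s, ENNReal.ofReal ‖fderiv ℝ f x‖ * h (f x)
      ≤ ∫⁻ t, h t * μH[(m:ℝ)] (f ⁻¹' {t} ∩ s) := by
  classical
  haveI : Nontrivial (EuclideanSpace ℝ (Fin (m+1))) := by
    refine ⟨⟨0, EuclideanSpace.single 0 1, fun hcon => ?_⟩⟩
    have := congrArg (fun z : EuclideanSpace ℝ (Fin (m+1)) => ‖z‖) hcon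
    simp [EuclideanSpace.norm_single] at this
  have hsphne : Nonempty (Metric.sphere (0 : EuclideanSpace ℝ (Fin (m+1))) 1) := by
    rw [nonempty_subtype]
    exact NormedSpace.sphere_nonempty.2 zero_le_one
  obtain ⟨u, hu⟩ := TopologicalSpace.exists_dense_seq
    (Metric.sphere (0 : EuclideanSpace ℝ (Fin (m+1))) 1)
  set v : ℕ → EuclideanSpace ℝ (Fin (m+1)) := fun k => (u k : EuclideanSpace ℝ (Fin (m+1)))
    with hvdef
  have hvnorm : ∀ k, ‖v k‖ = 1 := by
    intro k
    have := (u k).2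
    rwa [mem_sphere_zero_iff_norm] at this
  have hFmeas : Measurable fun x => ENNReal.ofReal ‖fderiv ℝ f x‖ * h (f x) :=
    ((measurable_fderiv ℝ f).norm.ennreal_ofReal).mul (hh.comp hf.measurable)
  -- main estimate for each ε
  have hmain : ∀ ε : ℝ, 0 < ε → ε < 1 →
      ENNReal.ofReal (1 - ε) * ∫⁻ x in s, ENNReal.ofReal ‖fderiv ℝ f x‖ * h (f x)
        ≤ ∫⁻ t, h t * μH[(m:ℝ)] (f ⁻¹' {t} ∩ s) := by
    intro ε hε0 hε1
    set c : ℕ → Set (EuclideanSpace ℝ (Fin (m+1))) :=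
      fun k => s ∩ {x | (1 - ε) * ‖fderiv ℝ f x‖ < fderiv ℝ f x (v k)} with hc
    have hcmeas : ∀ k, MeasurableSet (c k) := by
      intro k
      refine hs.inter (measurableSet_lt ?_ ?_)
      · exact (measurable_fderiv ℝ f).norm.const_mul _
      · exact measurable_fderiv_apply_const ℝ f (v k)
    have hcsub : ∀ k, c k ⊆ s := fun k => inter_subset_left
    have hcover : s ⊆ ⋃ k, c k := by
      intro x hx
      have hφ : fderiv ℝ f x ≠ 0 := hne x hx
      set φ := fderiv ℝ f x with hφdef
      set z := (InnerProductSpace.toDual ℝ (EuclideanSpace ℝ (Fin (m+1)))).symm φ with hz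
      have hznorm : ‖z‖ = ‖φ‖ := LinearIsometryEquiv.norm_map _ φ
      have hzne : z ≠ 0 := by
        intro hcon
        apply hφ
        have : ‖φ‖ = 0 := by rw [← hznorm, hcon, norm_zero]
        exact norm_eq_zero.1 this
      set u₀ : EuclideanSpace ℝ (Fin (m+1)) := ‖z‖⁻¹ • z with hu₀
      have hu₀norm : ‖u₀‖ = 1 := norm_smul_inv_norm hzne
      have hφu₀ : φ u₀ = ‖φ‖ := by
        have happly : φ u₀ = ⟪z, u₀⟫ := (InnerProductSpace.toDual_symm_apply).symm
        rw [happly, hu₀, real_inner_smul_right, real_inner_self_eq_norm_mul_norm]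
        rw [← hznorm]
        field_simp
      have hmem : u₀ ∈ Metric.sphere (0 : EuclideanSpace ℝ (Fin (m+1))) 1 := by
        rwa [mem_sphere_zero_iff_norm]
      obtain ⟨k, hk⟩ := (Metric.denseRange_iff.1 hu) ⟨u₀, hmem⟩ ε hε0
      refine Set.mem_iUnion.2 ⟨k, hx, ?_⟩
      have hdist : ‖u₀ - v k‖ < ε := by
        have := hk
        rw [Subtype.dist_eq, dist_eq_norm] at this
        simpa [hvdef] using this.trans_le (le_refl _)
      have hbound : |φ (u₀ - v k)| ≤ ‖φ‖ * ‖u₀ - v k‖ := φ.le_opNorm _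
      have hφnorm_pos : 0 < ‖φ‖ := norm_pos_iff.2 hφ
      have heq : φ (v k) = φ u₀ - φ (u₀ - v k) := by rw [map_sub]; ring
      simp only [Set.mem_setOf_eq]
      show (1 - ε) * ‖φ‖ < φ (v k)
      rw [heq, hφu₀]
      have h2 : φ (u₀ - v k) < ‖φ‖ * ε := by
        calc φ (u₀ - v k) ≤ |φ (u₀ - v k)| := le_abs_self _
          _ ≤ ‖φ‖ * ‖u₀ - v k‖ := hbound
          _ < ‖φ‖ * ε := mul_lt_mul_of_pos_left hdist hφnorm_pos
      nlinarith
    set q : ℕ → Set (EuclideanSpace ℝ (Fin (m+1))) := disjointed c with hq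
    have hqmeas : ∀ k, MeasurableSet (q k) := MeasurableSet.disjointed hcmeas
    have hqdisj : Pairwise (Function.onFun Disjoint q) := disjoint_disjointed c
    have hqsub : ∀ k, q k ⊆ c k := fun k => disjointed_subset c k
    have hqsubs : ∀ k, q k ⊆ s := fun k => (hqsub k).trans (hcsub k)
    have hqunion : s = ⋃ k, q k := by
      apply Set.Subset.antisymm
      · rw [hq, iUnion_disjointed]
        exact hcover
      · exact Set.iUnion_subset hqsubs
    have hkey : ∀ k, ∫⁻ x in q k, ENNReal.ofReal ((1-ε) * ‖fderiv ℝ f x‖) * h (f x)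
        ≤ ∫⁻ t, h t * μH[(m:ℝ)] (f ⁻¹' {t} ∩ q k) := by
      intro k
      have hlt : ∀ x ∈ q k, (1-ε) * ‖fderiv ℝ f x‖ < fderiv ℝ f x (v k) :=
        fun x hx => (hqsub k hx).2
      have hnev : ∀ x ∈ q k, fderiv ℝ f x (v k) ≠ 0 := by
        intro x hx
        have h1 := hlt x hx
        have h2 : 0 < ‖fderiv ℝ f x‖ := norm_pos_iff.2 (hne x (hqsubs k hx))
        have : (0:ℝ) < (1-ε) * ‖fderiv ℝ f x‖ := by nlinarith
        exact ne_of_gt (lt_trans this h1)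
      refine le_trans ?_ (cell_le f (v k) (hvnorm k) (q k) (hqmeas k)
        (fun x hx => hder x (hqsubs k hx)) hnev h hh)
      refine setLIntegral_mono' (hqmeas k) fun x hx => ?_
      refine mul_le_mul_left ?_ _
      apply ENNReal.ofReal_le_ofReal
      have h1 := hlt x hx
      have := abs_nonneg (fderiv ℝ f x (v k))
      calc (1-ε) * ‖fderiv ℝ f x‖ ≤ fderiv ℝ f x (v k) := h1.le
        _ ≤ |fderiv ℝ f x (v k)| := le_abs_self _
    -- assemble
    have hconst : ENNReal.ofReal (1 - ε) * ∫⁻ x in s, ENNReal.ofReal ‖fderiv ℝ f x‖ * h (f x)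
        = ∫⁻ x in s, ENNReal.ofReal ((1-ε) * ‖fderiv ℝ f x‖) * h (f x) := by
      rw [← lintegral_const_mul _ hFmeas]
      congr 1
      funext x
      rw [ENNReal.ofReal_mul (by linarith), mul_assoc]
    rw [hconst]
    calc ∫⁻ x in s, ENNReal.ofReal ((1-ε) * ‖fderiv ℝ f x‖) * h (f x)
        = ∑' k, ∫⁻ x in q k, ENNReal.ofReal ((1-ε) * ‖fderiv ℝ f x‖) * h (f x) := by
          rw [show (∫⁻ x in s, ENNReal.ofReal ((1-ε) * ‖fderiv ℝ f x‖) * h (f x))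
            = ∫⁻ x in ⋃ k, q k, ENNReal.ofReal ((1-ε) * ‖fderiv ℝ f x‖) * h (f x) from by
              rw [← hqunion]]
          exact lintegral_iUnion hqmeas hqdisj _
      _ ≤ ∑' k, ∫⁻ t, h t * μH[(m:ℝ)] (f ⁻¹' {t} ∩ q k) := ENNReal.tsum_le_tsum hkey
      _ ≤ ∫⁻ t, h t * μH[(m:ℝ)] (f ⁻¹' {t} ∩ s) := by
          rw [ENNReal.tsum_eq_iSup_sum]
          refine iSup_le fun J => ?_
          refine le_trans (finset_sum_lintegral_le volume J _) ?_
          refine lintegral_mono fun t => ?_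
          rw [← Finset.mul_sum]
          refine mul_le_mul_right ?_ (h t)
          exact sum_measure_inter_le _ J q hqmeas hqdisj _ s hqsubs
  -- pass to the limit ε → 0
  have htend : Filter.Tendsto
      (fun k : ℕ => ENNReal.ofReal (1 - 1/(k+2)) *
        ∫⁻ x in s, ENNReal.ofReal ‖fderiv ℝ f x‖ * h (f x)) Filter.atTop
      (nhds ((1 : ENNReal) * ∫⁻ x in s, ENNReal.ofReal ‖fderiv ℝ f x‖ * h (f x))) := by
    refine ENNReal.Tendsto.mul_const ?_ (Or.inl one_ne_zero)
    have hreal : Filter.Tendsto (fun k : ℕ => 1 - 1/((k:ℝ)+2)) Filter.atTop (nhds 1) := by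
      have h1 : Filter.Tendsto (fun k : ℕ => 1/((k:ℝ)+2)) Filter.atTop (nhds 0) := by
        apply Filter.Tendsto.div_atTop tendsto_const_nhds
        exact Filter.tendsto_atTop_add_const_right _ 2 tendsto_natCast_atTop_atTop
      have := Filter.Tendsto.const_sub (1:ℝ) h1
      simpa using this
    have := (ENNReal.continuous_ofReal.tendsto 1).comp hreal
    simpa [Function.comp_def] using this
  have hbound : ∀ k : ℕ, ENNReal.ofReal (1 - 1/(k+2)) *
      ∫⁻ x in s, ENNReal.ofReal ‖fderiv ℝ f x‖ * h (f x)
      ≤ ∫⁻ t, h t * μH[(m:ℝ)] (f ⁻¹' {t} ∩ s) := by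
    intro k
    apply hmain
    · positivity
    · rw [div_lt_one (by positivity)]
      linarith [Nat.cast_nonneg (α := ℝ) k]
  have := le_of_tendsto htend (Filter.Eventually.of_forall hbound)
  simpa using this


lemma model_pos_lt_top (C : ℝ) (hC : 0 ≤ C) :
    ∫⁻ t in Set.Ioo (0:ℝ) (1/2),
      ENNReal.ofReal C / ENNReal.ofReal (|t| * (Real.log |t|) ^ 2) < ⊤ := by
  classical
  set L := Real.log 2 with hL
  have hLpos : 0 < L := Real.log_pos (by norm_num)
  set G : ℝ → ENNReal := fun t => ENNReal.ofReal C / ENNReal.ofReal (|t| * (Real.log |t|) ^ 2)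
    with hG
  have hcover : Set.Ioo (0:ℝ) (1/2) ⊆ ⋃ k : ℕ, Set.Ico ((1/2:ℝ)^(k+2)) ((1/2:ℝ)^(k+1)) := by
    intro t ht
    obtain ⟨ht0, ht12⟩ := ht
    have hex : ∃ j : ℕ, (1/2:ℝ)^j ≤ t := by
      obtain ⟨n, hn⟩ := exists_pow_lt_of_lt_one ht0 (by norm_num : (1/2:ℝ) < 1)
      exact ⟨n, hn.le⟩
    have hjle : (1/2:ℝ)^(Nat.find hex) ≤ t := Nat.find_spec hex
    have hjmin : ∀ i < Nat.find hex, ¬((1/2:ℝ)^i ≤ t) := fun i hi => Nat.find_min hex hi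
    set j := Nat.find hex
    have hj2 : 2 ≤ j := by
      by_contra hcon
      push_neg at hcon
      interval_cases j
      · simp at hjle; linarith
      · rw [pow_one] at hjle; linarith
    refine Set.mem_iUnion.2 ⟨j - 2, ?_, ?_⟩
    · rw [show j - 2 + 2 = j by omega]
      exact hjle
    · rw [show j - 2 + 1 = j - 1 by omega]
      exact not_le.1 (hjmin (j-1) (by omega))
  have hterm : ∀ k : ℕ, ∫⁻ t in Set.Ico ((1/2:ℝ)^(k+2)) ((1/2:ℝ)^(k+1)), G t
      ≤ ENNReal.ofReal (C / L^2) * ENNReal.ofReal (1/((k:ℝ)+1)^2) := by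
    intro k
    set a := (1/2:ℝ)^(k+2) with ha
    set b := (1/2:ℝ)^(k+1) with hb
    have hapos : 0 < a := by positivity
    have hbpos : 0 < b := by positivity
    have hb1 : b < 1 := pow_lt_one₀ (by norm_num) (by norm_num) (by omega)
    have hwk : 0 < a * (((k:ℝ)+1)^2 * L^2) := by positivity
    have hGb : ∀ t ∈ Set.Ico a b,
        G t ≤ ENNReal.ofReal C / ENNReal.ofReal (a * (((k:ℝ)+1)^2 * L^2)) := by
      rintro t ⟨hta, htb⟩
      have ht0 : 0 < t := lt_of_lt_of_le hapos hta
      have habs : |t| = t := abs_of_pos ht0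
      have hlogt : Real.log t ≤ Real.log b := Real.log_le_log ht0 htb.le
      have hlogb : Real.log b = -(((k:ℝ)+1) * L) := by
        rw [hb, Real.log_pow]
        rw [show Real.log (1/2) = -L by rw [one_div, Real.log_inv, hL]]
        push_cast
        ring
      have hc : (0:ℝ) < ((k:ℝ)+1) * L := by positivity
      have hsq : (((k:ℝ)+1) * L)^2 ≤ (Real.log t)^2 := by
        rw [hlogb] at hlogt
        nlinarith [hlogt, hc, sq_nonneg (Real.log t + ((k:ℝ)+1)*L)]
      have hwt : a * (((k:ℝ)+1)^2 * L^2) ≤ |t| * (Real.log |t|)^2 := by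
        rw [habs]
        have h2 : ((k:ℝ)+1)^2 * L^2 = (((k:ℝ)+1) * L)^2 := by ring
        rw [h2]
        exact mul_le_mul hta hsq (by positivity) ht0.le
      exact ENNReal.div_le_div_left (ENNReal.ofReal_le_ofReal hwt) _
    calc ∫⁻ t in Set.Ico a b, G t
        ≤ ∫⁻ _ in Set.Ico a b, ENNReal.ofReal C / ENNReal.ofReal (a * (((k:ℝ)+1)^2 * L^2)) :=
          setLIntegral_mono' measurableSet_Ico hGb
      _ = (ENNReal.ofReal C / ENNReal.ofReal (a * (((k:ℝ)+1)^2 * L^2))) * volume (Set.Ico a b) :=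
          setLIntegral_const _ _
      _ = ENNReal.ofReal (C / L^2) * ENNReal.ofReal (1/((k:ℝ)+1)^2) := by
          rw [Real.volume_Ico]
          have hba : b - a = a := by rw [ha, hb, pow_succ]; ring
          rw [hba]
          rw [← ENNReal.ofReal_div_of_pos hwk, ← ENNReal.ofReal_mul (by positivity)]
          rw [← ENNReal.ofReal_mul (by positivity)]
          congr 1
          field_simp
  calc ∫⁻ t in Set.Ioo (0:ℝ) (1/2), G t
      ≤ ∑' k : ℕ, ∫⁻ t in Set.Ico ((1/2:ℝ)^(k+2)) ((1/2:ℝ)^(k+1)), G t :=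
        le_trans (lintegral_mono_set hcover) (lintegral_iUnion_le _ _)
    _ ≤ ∑' k : ℕ, ENNReal.ofReal (C / L^2) * ENNReal.ofReal (1/((k:ℝ)+1)^2) :=
        ENNReal.tsum_le_tsum hterm
    _ = ENNReal.ofReal (C / L^2) * ∑' k : ℕ, ENNReal.ofReal (1/((k:ℝ)+1)^2) :=
        ENNReal.tsum_mul_left
    _ < ⊤ := by
        refine ENNReal.mul_lt_top ENNReal.ofReal_lt_top ?_
        have h0 : Summable (fun n : ℕ => 1 / (n:ℝ)^2) := Real.summable_one_div_nat_pow.2 one_lt_two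
        have hsum : Summable (fun k : ℕ => 1/((k:ℝ)+1)^2) := by
          have := (_root_.summable_nat_add_iff 1).2 h0
          refine this.congr fun k => ?_
          push_cast
          ring
        rw [← ENNReal.ofReal_tsum_of_nonneg (fun k => by positivity) hsum]
        exact ENNReal.ofReal_lt_top

lemma model_lt_top (C : ℝ) (hC : 0 ≤ C) :
    ∫⁻ t in Set.Ioo (-(1:ℝ)/2) (1/2),
      ENNReal.ofReal C / ENNReal.ofReal (|t| * (Real.log |t|) ^ 2) < ⊤ := by
  have hsub : Set.Ioo (-(1:ℝ)/2) (1/2) ⊆ (Set.Ioo (-(1:ℝ)/2) 0 ∪ {0}) ∪ Set.Ioo 0 (1/2) := by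
    rintro t ⟨h1, h2⟩
    rcases lt_trichotomy t 0 with h | h | h
    · exact Or.inl (Or.inl ⟨h1, h⟩)
    · exact Or.inl (Or.inr (by simp [h]))
    · exact Or.inr ⟨h, h2⟩
  refine lt_of_le_of_lt (lintegral_mono_set hsub) ?_
  refine lt_of_le_of_lt (lintegral_union_le _ _ _) ?_
  refine lt_of_le_of_lt (add_le_add_left (lintegral_union_le _ _ _) _) ?_
  have hzero : ∫⁻ t in ({0} : Set ℝ),
      ENNReal.ofReal C / ENNReal.ofReal (|t| * (Real.log |t|) ^ 2) = 0 :=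
    setLIntegral_measure_zero _ _ (by simp)
  have hneg : ∫⁻ t in Set.Ioo (-(1:ℝ)/2) 0,
        ENNReal.ofReal C / ENNReal.ofReal (|t| * (Real.log |t|) ^ 2)
      = ∫⁻ t in Set.Ioo (0:ℝ) (1/2),
        ENNReal.ofReal C / ENNReal.ofReal (|t| * (Real.log |t|) ^ 2) := by
    have hmp : MeasurePreserving (fun t : ℝ => -t) volume volume :=
      Measure.measurePreserving_neg volume
    have hemb : MeasurableEmbedding (fun t : ℝ => -t) :=
      (Homeomorph.neg ℝ).measurableEmbedding
    have hkey := hmp.setLIntegral_comp_emb hemb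
      (fun t => ENNReal.ofReal C / ENNReal.ofReal (|t| * (Real.log |t|) ^ 2))
      (Set.Ioo (0:ℝ) (1/2))
    have himg : (fun t : ℝ => -t) '' Set.Ioo (0:ℝ) (1/2) = Set.Ioo (-(1:ℝ)/2) 0 := by
      ext x
      simp only [Set.mem_image, Set.mem_Ioo]
      constructor
      · rintro ⟨y, ⟨hy1, hy2⟩, rfl⟩; constructor <;> linarith
      · rintro ⟨hx1, hx2⟩; exact ⟨-x, ⟨by linarith, by linarith⟩, by ring⟩
    rw [himg] at hkey
    rw [← hkey]
    refine setLIntegral_congr_fun measurableSet_Ioo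
      (fun t _ => ?_)
    rw [abs_neg]
  rw [hzero, hneg, add_zero]
  exact ENNReal.add_lt_top.2 ⟨model_pos_lt_top C hC, model_pos_lt_top C hC⟩


/-- If `g = ∇f/(f (ln|f|)²)` on `U \\ f⁻¹(0)`, `f` Lipschitz with `|f| < 1/2` and level sets of
uniformly bounded `(n-1)`-Hausdorff measure, then `g ∈ L¹(U)`; more precisely
`∫_U |g| ≤ ∫_{-1/2}^{1/2} m(f⁻¹(t) ∩ U)/(|t| (ln|t|)²) dt`, finite when `m(f⁻¹(t)) ≤ C`. -/
theorem stmt7 {n : ℕ} (hn : 1 ≤ n) (U : Set (EuclideanSpace ℝ (Fin n))) (hU : IsOpen U)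
    (hUconn : IsConnected U) (hUbdd : Bornology.IsBounded U)
    (f : EuclideanSpace ℝ (Fin n) → ℝ) (L : NNReal) (hf : LipschitzWith L f)
    (hfsmall : ∀ x ∈ U, |f x| < 1/2)
    (C : ℝ) (hC : 0 < C)
    (hlevel : ∀ t ∈ Set.Ioo (-(1:ℝ)/2) (1/2),
      μH[(n:ℝ) - 1] (f ⁻¹' {t} ∩ U) ≤ ENNReal.ofReal C) :
    (∫⁻ x in U, ENNReal.ofReal
        (‖fderiv ℝ f x‖ / (|f x| * (Real.log |f x|) ^ 2)) ∂volume)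
      ≤ ∫⁻ t in Set.Ioo (-(1:ℝ)/2) (1/2),
          μH[(n:ℝ) - 1] (f ⁻¹' {t} ∩ U) / ENNReal.ofReal (|t| * (Real.log |t|) ^ 2) ∧
    IntegrableOn
      (fun x => ‖fderiv ℝ f x‖ / (|f x| * (Real.log |f x|) ^ 2)) U volume := by
  classical
  obtain ⟨m, rfl⟩ : ∃ m, n = m + 1 := ⟨n - 1, by omega⟩
  have hidx : ((m + 1 : ℕ) : ℝ) - 1 = (m : ℝ) := by push_cast; ring
  simp only [hidx]
  set h : ℝ → ENNReal := fun t => (ENNReal.ofReal (|t| * Real.log |t| ^ 2))⁻¹ with hhdef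
  have hh : Measurable h := by
    refine Measurable.inv ?_
    exact (measurable_abs.mul ((Real.measurable_log.comp measurable_abs).pow_const 2)).ennreal_ofReal
  set s : Set (EuclideanSpace ℝ (Fin (m+1))) :=
    ((U ∩ {x | DifferentiableAt ℝ f x}) ∩ {x | fderiv ℝ f x ≠ 0}) ∩ {x | f x ≠ 0} with hsdef
  have hsmeas : MeasurableSet s := by
    refine MeasurableSet.inter (MeasurableSet.inter (MeasurableSet.inter ?_ ?_) ?_) ?_
    · exact hU.measurableSet
    · exact measurableSet_of_differentiableAt ℝ f
    · exact ((measurable_fderiv ℝ f) (measurableSet_singleton 0)).compl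
    · exact (hf.continuous.measurable (measurableSet_singleton 0)).compl
  have hsU : s ⊆ U := fun x hx => hx.1.1.1
  -- pointwise identification of the integrand
  have hind : ∀ x : EuclideanSpace ℝ (Fin (m+1)),
      U.indicator (fun x => ENNReal.ofReal
        (‖fderiv ℝ f x‖ / (|f x| * (Real.log |f x|) ^ 2))) x
      = s.indicator (fun x => ENNReal.ofReal ‖fderiv ℝ f x‖ * h (f x)) x := by
    intro x
    by_cases hxs : x ∈ s
    · rw [Set.indicator_of_mem (hsU hxs), Set.indicator_of_mem hxs]
      obtain ⟨⟨⟨hxU, _⟩, _⟩, hfx0⟩ := hxs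
      have hfx0' : f x ≠ 0 := hfx0
      have habs : 0 < |f x| := abs_pos.2 hfx0'
      have habslt : |f x| < 1 := lt_trans (hfsmall x hxU) (by norm_num)
      have hlogne : Real.log |f x| < 0 := Real.log_neg habs habslt
      have hw : 0 < |f x| * Real.log |f x| ^ 2 :=
        mul_pos habs (pow_two_pos_of_ne_zero hlogne.ne)
      rw [div_eq_mul_inv, ENNReal.ofReal_mul (norm_nonneg _)]
      congr 1
      rw [hhdef]
      exact ENNReal.ofReal_inv_of_pos hw
    · rw [Set.indicator_of_notMem hxs]
      by_cases hxU : x ∈ U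
      · rw [Set.indicator_of_mem hxU]
        by_cases hdiff : DifferentiableAt ℝ f x
        · by_cases hfd : fderiv ℝ f x = 0
          · rw [hfd]; simp
          · have hfx : f x = 0 := by
              by_contra hfx
              exact hxs ⟨⟨⟨hxU, hdiff⟩, hfd⟩, hfx⟩
            rw [hfx]
            simp
        · rw [fderiv_zero_of_not_differentiableAt hdiff]
          simp
      · rw [Set.indicator_of_notMem hxU]
  have hLHS : (∫⁻ x in U, ENNReal.ofReal
        (‖fderiv ℝ f x‖ / (|f x| * (Real.log |f x|) ^ 2)) ∂volume)
      = ∫⁻ x in s, ENNReal.ofReal ‖fderiv ℝ f x‖ * h (f x) := by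
    rw [← lintegral_indicator hU.measurableSet, ← lintegral_indicator hsmeas]
    exact lintegral_congr hind
  -- the coarea bound
  have hder : ∀ x ∈ s, HasFDerivAt f (fderiv ℝ f x) x :=
    fun x hx => hx.1.1.2.hasFDerivAt
  have hne : ∀ x ∈ s, fderiv ℝ f x ≠ 0 := fun x hx => hx.1.2
  have hco := coarea_le f hf.continuous s hsmeas hder hne h hh
  -- monotonicity in the set and restriction to Ioo
  have hmono : ∫⁻ t, h t * μH[(m:ℝ)] (f ⁻¹' {t} ∩ s)
      ≤ ∫⁻ t, h t * μH[(m:ℝ)] (f ⁻¹' {t} ∩ U) := by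
    refine lintegral_mono fun t => mul_le_mul_right ?_ _
    exact measure_mono (Set.inter_subset_inter_right _ hsU)
  have hIoo : ∫⁻ t, h t * μH[(m:ℝ)] (f ⁻¹' {t} ∩ U)
      = ∫⁻ t in Set.Ioo (-(1:ℝ)/2) (1/2), h t * μH[(m:ℝ)] (f ⁻¹' {t} ∩ U) := by
    rw [← lintegral_indicator measurableSet_Ioo]
    refine lintegral_congr fun t => ?_
    by_cases ht : t ∈ Set.Ioo (-(1:ℝ)/2) (1/2)
    · rw [Set.indicator_of_mem ht]
    · rw [Set.indicator_of_notMem ht]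
      have hempty : f ⁻¹' {t} ∩ U = ∅ := by
        ext x
        simp only [Set.mem_inter_iff, Set.mem_preimage, Set.mem_singleton_iff,
          Set.mem_empty_iff_false, iff_false, not_and]
        intro hfx hxU
        apply ht
        rw [← hfx]
        constructor
        · have := hfsmall x hxU
          rw [abs_lt] at this
          linarith [this.1]
        · have := hfsmall x hxU
          rw [abs_lt] at this
          exact this.2
      rw [hempty]
      simp
  have hdiv : ∫⁻ t in Set.Ioo (-(1:ℝ)/2) (1/2), h t * μH[(m:ℝ)] (f ⁻¹' {t} ∩ U)
      = ∫⁻ t in Set.Ioo (-(1:ℝ)/2) (1/2),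
          μH[(m:ℝ)] (f ⁻¹' {t} ∩ U) / ENNReal.ofReal (|t| * (Real.log |t|) ^ 2) := by
    refine setLIntegral_congr_fun measurableSet_Ioo (fun t _ => ?_)
    rw [hhdef, div_eq_mul_inv, mul_comm]
  have hpart1 : (∫⁻ x in U, ENNReal.ofReal
        (‖fderiv ℝ f x‖ / (|f x| * (Real.log |f x|) ^ 2)) ∂volume)
      ≤ ∫⁻ t in Set.Ioo (-(1:ℝ)/2) (1/2),
          μH[(m:ℝ)] (f ⁻¹' {t} ∩ U) / ENNReal.ofReal (|t| * (Real.log |t|) ^ 2) := by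
    rw [hLHS, ← hdiv, ← hIoo]
    exact le_trans hco hmono
  refine ⟨hpart1, ?_⟩
  -- integrability
  have hlevel' : ∀ t ∈ Set.Ioo (-(1:ℝ)/2) (1/2),
      μH[(m:ℝ)] (f ⁻¹' {t} ∩ U) ≤ ENNReal.ofReal C := by
    intro t ht
    have := hlevel t ht
    rwa [hidx] at this
  have hRHSbound : (∫⁻ t in Set.Ioo (-(1:ℝ)/2) (1/2),
        μH[(m:ℝ)] (f ⁻¹' {t} ∩ U) / ENNReal.ofReal (|t| * (Real.log |t|) ^ 2))
      ≤ ∫⁻ t in Set.Ioo (-(1:ℝ)/2) (1/2),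
        ENNReal.ofReal C / ENNReal.ofReal (|t| * (Real.log |t|) ^ 2) := by
    refine setLIntegral_mono' measurableSet_Ioo fun t ht => ?_
    exact ENNReal.div_le_div_right (hlevel' t ht) _
  have hg : Measurable fun x : EuclideanSpace ℝ (Fin (m+1)) =>
      ‖fderiv ℝ f x‖ / (|f x| * (Real.log |f x|) ^ 2) := by
    refine ((measurable_fderiv ℝ f).norm).div ?_
    exact (hf.continuous.measurable.abs).mul
      ((Real.measurable_log.comp hf.continuous.measurable.abs).pow_const 2)
  refine ⟨hg.aestronglyMeasurable, ?_⟩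
  rw [hasFiniteIntegral_iff_ofReal (Filter.Eventually.of_forall fun x => ?_)]
  swap
  · exact div_nonneg (norm_nonneg _) (by positivity)
  calc ∫⁻ x in U, ENNReal.ofReal (‖fderiv ℝ f x‖ / (|f x| * (Real.log |f x|) ^ 2)) ∂volume
      ≤ ∫⁻ t in Set.Ioo (-(1:ℝ)/2) (1/2),
          μH[(m:ℝ)] (f ⁻¹' {t} ∩ U) / ENNReal.ofReal (|t| * (Real.log |t|) ^ 2) := hpart1
    _ ≤ ∫⁻ t in Set.Ioo (-(1:ℝ)/2) (1/2),
          ENNReal.ofReal C / ENNReal.ofReal (|t| * (Real.log |t|) ^ 2) := hRHSbound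
    _ < ⊤ := model_lt_top C hC.le
end

section
/- Let v be bounded, continuous on U, differentiable on U \ K for a closed set K with v|_K = 0, and suppose its pointwise gradient g on U \ K is in L¹_loc(U). If moreover m(K_{3ε} ∩ supp η) / (ε |ln ε|) → 0 as ε → 0 for each test function η (where K_ε denotes the ε-neighborhood of K) and |v| ≲ 1/|ln ε| on K_{3ε} \ K_ε, then g is the weak gradient of v on U: ∫_U v ∇η = −∫_U η g for all η ∈ C_c^∞(U). -/
open MeasureTheory Metric Filter
open scoped Convolution

lemma smoothTransition_deriv_eq_zero {y : ℝ} (hy : y ∉ Set.Icc (0:ℝ) 1) :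
    deriv Real.smoothTransition y = 0 := by
  simp only [Set.mem_Icc, not_and_or, not_le] at hy
  rcases hy with hy | hy
  · have h : Real.smoothTransition =ᶠ[nhds y] (fun _ => (0:ℝ)) := by
      filter_upwards [Iio_mem_nhds hy] with z hz
      exact Real.smoothTransition.zero_of_nonpos (le_of_lt hz)
    rw [h.deriv_eq]; exact deriv_const y 0
  · have h : Real.smoothTransition =ᶠ[nhds y] (fun _ => (1:ℝ)) := by
      filter_upwards [Ioi_mem_nhds hy] with z hz
      exact Real.smoothTransition.one_of_one_le (le_of_lt hz)
    rw [h.deriv_eq]; exact deriv_const y 1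

lemma smoothTransition_deriv_bound :
    ∃ B : ℝ, 0 < B ∧ ∀ y : ℝ, |deriv Real.smoothTransition y| ≤ B := by
  have hcd : Continuous (deriv Real.smoothTransition) :=
    (Real.smoothTransition.contDiff (n := (⊤:ℕ∞))).continuous_deriv (by exact_mod_cast le_top)
  have hsupp : HasCompactSupport (deriv Real.smoothTransition) :=
    HasCompactSupport.intro (isCompact_Icc (a := (0:ℝ)) (b := 1))
      (fun y hy => smoothTransition_deriv_eq_zero hy)
  obtain ⟨C, hC⟩ := hsupp.exists_bound_of_continuous hcd
  exact ⟨max C 1, lt_of_lt_of_le one_pos (le_max_right _ _),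
    fun y => (hC y).trans (le_max_left _ _)⟩

lemma exists_cutoff {n : ℕ} (K : Set (EuclideanSpace ℝ (Fin n))) :
    ∃ B : ℝ, 0 < B ∧ ∀ ε : ℝ, 0 < ε → ∃ ρ : EuclideanSpace ℝ (Fin n) → ℝ,
      ContDiff ℝ (↑(⊤:ℕ∞)) ρ ∧
      (∀ x, infDist x K < (7/5) * ε → ρ x = 0) ∧
      (∀ x, (13/5) * ε < infDist x K → ρ x = 1) ∧
      (∀ x, 0 ≤ ρ x ∧ ρ x ≤ 1) ∧
      (∀ x, ‖fderiv ℝ ρ x‖ ≤ B / ε) := by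
  obtain ⟨B, hB0, hB⟩ := smoothTransition_deriv_bound
  refine ⟨B, hB0, fun ε hε => ?_⟩
  set d : EuclideanSpace ℝ (Fin n) → ℝ := fun x => infDist x K with hd_def
  have hd_lip : LipschitzWith 1 d := lipschitz_infDist_pt K
  have hd_cont : Continuous d := hd_lip.continuous
  set φ : ContDiffBump (0 : EuclideanSpace ℝ (Fin n)) :=
    ⟨ε/20, ε/10, by positivity, by linarith⟩ with hφ_def
  set u : EuclideanSpace ℝ (Fin n) → ℝ :=
    (φ.normed volume) ⋆[ContinuousLinearMap.lsmul ℝ ℝ, volume] d with hu_def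
  have hu_smooth : ContDiff ℝ (↑(⊤:ℕ∞)) u :=
    HasCompactSupport.contDiff_convolution_left _ φ.hasCompactSupport_normed
      φ.contDiff_normed hd_cont.locallyIntegrable
  have hu_close : ∀ x, dist (u x) (d x) ≤ ε/10 := by
    intro x
    refine φ.dist_normed_convolution_le hd_cont.aestronglyMeasurable (fun y hy => ?_)
    calc dist (d y) (d x) ≤ 1 * dist y x := hd_lip.dist_le_mul y x
    _ ≤ ε/10 := by rw [one_mul]; exact le_of_lt (mem_ball.mp hy)
  have hint : ∀ x : EuclideanSpace ℝ (Fin n),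
      Integrable (fun t => φ.normed volume t • d (x - t)) volume := by
    intro x
    apply Continuous.integrable_of_hasCompactSupport
    · exact φ.continuous_normed.smul (hd_cont.comp (continuous_const.sub continuous_id))
    · exact φ.hasCompactSupport_normed.smul_right
  have hu_lip : LipschitzWith 1 u := by
    apply LipschitzWith.of_dist_le_mul
    intro x y
    have h1 : u x - u y = ∫ t, φ.normed volume t • (d (x - t) - d (y - t)) := by
      rw [hu_def]
      simp only [convolution_def, ContinuousLinearMap.lsmul_apply]
      rw [← integral_sub (hint x) (hint y)]
      simp only [smul_eq_mul, mul_sub]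
    rw [Real.dist_eq, h1]
    calc |∫ t, φ.normed volume t • (d (x - t) - d (y - t))|
        ≤ ∫ t, φ.normed volume t * dist x y := by
          rw [← Real.norm_eq_abs]
          refine norm_integral_le_of_norm_le (φ.integrable_normed.mul_const _) ?_
          filter_upwards with t
          rw [norm_smul, Real.norm_eq_abs, Real.norm_eq_abs,
            abs_of_nonneg (φ.nonneg_normed t)]
          refine mul_le_mul_of_nonneg_left ?_ (φ.nonneg_normed t)
          calc |d (x - t) - d (y - t)| = dist (d (x-t)) (d (y-t)) := (Real.dist_eq _ _).symm
          _ ≤ 1 * dist (x - t) (y - t) := hd_lip.dist_le_mul _ _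
          _ = dist x y := by rw [one_mul, dist_sub_right]
      _ = 1 * dist x y := by rw [integral_mul_const, φ.integral_normed]
  have hu_diff : Differentiable ℝ u := hu_smooth.differentiable (by simp)
  have hu'le : ∀ x, ‖fderiv ℝ u x‖ ≤ 1 := by
    intro x
    have := (hu_diff x).hasFDerivAt.le_of_lipschitz hu_lip
    simpa using this
  set t := Real.smoothTransition with ht_def
  refine ⟨fun x => t ((1/ε) * u x - 3/2), ?_, ?_, ?_, ?_, ?_⟩
  · exact Real.smoothTransition.contDiff.comp ((contDiff_const.mul hu_smooth).sub contDiff_const)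
  · intro x hx
    apply Real.smoothTransition.zero_of_nonpos
    have h2 : u x ≤ d x + ε/10 := by
      have h3 := abs_le.mp ((Real.dist_eq _ _) ▸ hu_close x); linarith [h3.1, h3.2]
    have hdx : d x < (7/5) * ε := hx
    have h4 : u x < (3/2) * ε := by linarith
    have : (1/ε) * u x < 3/2 := by
      rw [one_div, inv_mul_lt_iff₀ hε]; linarith
    linarith
  · intro x hx
    apply Real.smoothTransition.one_of_one_le
    have h2 : d x - ε/10 ≤ u x := by
      have h3 := abs_le.mp ((Real.dist_eq _ _) ▸ hu_close x); linarith [h3.1, h3.2]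
    have hdx : (13/5) * ε < d x := hx
    have h4 : (5/2) * ε < u x := by linarith
    have : 5/2 < (1/ε) * u x := by
      rw [one_div, lt_inv_mul_iff₀ hε]; linarith
    linarith
  · exact fun x => ⟨Real.smoothTransition.nonneg _, Real.smoothTransition.le_one _⟩
  · intro x
    have h2 : HasFDerivAt (fun y : EuclideanSpace ℝ (Fin n) => (1/ε) * u y - 3/2)
        ((1/ε) • fderiv ℝ u x) x := (((hu_diff x).hasFDerivAt).const_mul (1/ε)).sub_const _
    have h3 : HasDerivAt t (deriv t ((1/ε) * u x - 3/2)) ((1/ε) * u x - 3/2) :=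
      ((Real.smoothTransition.contDiff (n := (⊤:ℕ∞))).differentiable (by simp)
        _).hasDerivAt
    have hρ : HasFDerivAt (fun y : EuclideanSpace ℝ (Fin n) => t ((1/ε) * u y - 3/2))
        (deriv t ((1/ε) * u x - 3/2) • ((1/ε) • fderiv ℝ u x)) x :=
      HasDerivAt.comp_hasFDerivAt (h₂ := t) (f := fun y : EuclideanSpace ℝ (Fin n) => (1/ε) * u y - 3/2) x h3 h2
    rw [hρ.fderiv]
    rw [norm_smul, norm_smul]
    calc ‖deriv t ((1/ε) * u x - 3/2)‖ * (‖(1:ℝ)/ε‖ * ‖fderiv ℝ u x‖)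
        ≤ B * ((1/ε) * 1) := by
          apply mul_le_mul ?_ ?_ (by positivity) (le_of_lt hB0)
          · rw [Real.norm_eq_abs]; exact hB _
          apply mul_le_mul ?_ (hu'le x) (norm_nonneg _) (by positivity)
          rw [Real.norm_eq_abs, abs_of_nonneg (by positivity)]
      _ = B / ε := by ring

lemma integral_fderiv_apply_eq_zero_pi {m : ℕ} (G : (Fin (m+1) → ℝ) → ℝ)
    (G' : (Fin (m+1) → ℝ) → ((Fin (m+1) → ℝ) →L[ℝ] ℝ))
    (hG : ∀ x, HasFDerivAt G (G' x) x) (hsupp : HasCompactSupport G)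
    (w : Fin (m+1) → ℝ) (hint : Integrable (fun x => G' x w)) :
    ∫ x, G' x w = 0 := by
  obtain ⟨R, hR0, hRsub⟩ : ∃ R, 0 < R ∧ tsupport G ⊆ ball (0 : Fin (m+1) → ℝ) R :=
    let ⟨R, hR, hsub⟩ := hsupp.isBounded.subset_ball_lt 0 0; ⟨R, hR, hsub⟩
  have hGd : Differentiable ℝ G := fun x => (hG x).differentiableAt
  have hGc : Continuous G := hGd.continuous
  have hzero : ∀ x ∉ tsupport G, G' x = 0 := by
    intro x hx
    have h1 : G =ᶠ[nhds x] (fun _ => (0:ℝ)) :=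
      eventually_of_mem ((isOpen_compl_iff.mpr (isClosed_tsupport G)).mem_nhds hx)
        (fun y hy => image_eq_zero_of_notMem_tsupport hy)
    have h2 : fderiv ℝ G x = 0 := by
      rw [Filter.EventuallyEq.fderiv_eq h1]; exact fderiv_const_apply 0
    rw [← (hG x).fderiv, h2]
  have hout : ∀ y : Fin (m+1) → ℝ, (∃ i, R ≤ |y i|) → G y = 0 := by
    rintro y ⟨i, hy⟩
    apply image_eq_zero_of_notMem_tsupport
    intro hmem
    have h := hRsub hmem
    rw [mem_ball, dist_zero_right] at h
    have := (norm_le_pi_norm y i).trans_lt h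
    rw [Real.norm_eq_abs] at this
    linarith
  set a : Fin (m+1) → ℝ := fun _ => -R with ha
  set b : Fin (m+1) → ℝ := fun _ => R with hb
  have hle : a ≤ b := fun i => by simp only [ha, hb]; linarith
  have hw : (∑ i : Fin (m+1), w i • (Pi.single (M := fun _ => ℝ) i 1)) = w := by
    ext j
    simp [Pi.single_apply, Finset.sum_apply, mul_ite, Finset.sum_ite_eq']
  have hsum : ∀ x, ∑ i, (w i • G' x) (Pi.single i 1) = G' x w := by
    intro x
    have h1 : ∀ i, (w i • G' x) (Pi.single i (1:ℝ))
        = G' x (w i • Pi.single (M := fun _ => ℝ) i 1) := fun i => by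
      rw [ContinuousLinearMap.smul_apply, (G' x).map_smul]
    rw [Finset.sum_congr rfl (fun i _ => h1 i), ← map_sum, hw]
  have key := MeasureTheory.integral_divergence_of_hasFDerivAt_off_countable' a b hle
    (fun i x => w i • G x) (fun i x => w i • G' x) ∅ Set.countable_empty
    (fun i => (hGc.const_smul (w i)).continuousOn)
    (fun x _ i => (hG x).const_smul (w i))
    (by simp only [hsum]; exact hint.integrableOn)
  simp only [hsum] at key
  have hrhs : (∑ i : Fin (m+1),
      ((∫ x in Set.Icc (a ∘ i.succAbove) (b ∘ i.succAbove), w i • G (i.insertNth (b i) x)) -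
        ∫ x in Set.Icc (a ∘ i.succAbove) (b ∘ i.succAbove), w i • G (i.insertNth (a i) x))) = 0 := by
    apply Finset.sum_eq_zero
    intro i _
    have h₁ : ∀ x : Fin m → ℝ, w i • G (i.insertNth (b i) x) = (0:ℝ) := fun x => by
      rw [hout _ ⟨i, by rw [Fin.insertNth_apply_same]; simp [hb, abs_of_pos hR0]⟩, smul_zero]
    have h₂ : ∀ x : Fin m → ℝ, w i • G (i.insertNth (a i) x) = (0:ℝ) := fun x => by
      rw [hout _ ⟨i, by rw [Fin.insertNth_apply_same]; simp [ha, abs_of_pos hR0]⟩, smul_zero]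
    simp only [h₁, h₂, integral_zero, sub_zero]
  rw [hrhs] at key
  rw [← key]
  symm
  apply MeasureTheory.setIntegral_eq_integral_of_forall_compl_eq_zero
  intro x hx
  have hxt : x ∉ tsupport G := by
    intro hmem
    apply hx
    have h := hRsub hmem
    rw [mem_ball, dist_zero_right] at h
    rw [Set.mem_Icc]
    constructor <;> intro i <;>
      have hi := (norm_le_pi_norm x i).trans_lt h <;>
      rw [Real.norm_eq_abs, abs_lt] at hi <;>
      simp only [ha, hb] <;> linarith [hi.1, hi.2]
  rw [hzero x hxt]
  rfl

lemma integral_fderiv_apply_eq_zero {n : ℕ} (F : EuclideanSpace ℝ (Fin n) → ℝ)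
    (F' : EuclideanSpace ℝ (Fin n) → (EuclideanSpace ℝ (Fin n) →L[ℝ] ℝ))
    (hF : ∀ x, HasFDerivAt F (F' x) x) (hsupp : HasCompactSupport F)
    (w : EuclideanSpace ℝ (Fin n)) (hint : Integrable (fun x => F' x w)) :
    ∫ x, F' x w = 0 := by
  cases n with
  | zero =>
    have hw : w = 0 := Subsingleton.elim w 0
    simp [hw]
  | succ m =>
    set e := EuclideanSpace.equiv (Fin (m+1)) ℝ with he
    set G : (Fin (m+1) → ℝ) → ℝ := fun y => F (e.symm y) with hG_def
    set G' : (Fin (m+1) → ℝ) → ((Fin (m+1) → ℝ) →L[ℝ] ℝ) :=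
      fun y => (F' (e.symm y)).comp (e.symm : (Fin (m+1) → ℝ) →L[ℝ] EuclideanSpace ℝ (Fin (m+1)))
      with hG'_def
    have hG : ∀ y, HasFDerivAt G (G' y) y := fun y => (hF _).comp y (e.symm.hasFDerivAt)
    have hsuppG : HasCompactSupport G := hsupp.comp_homeomorph e.symm.toHomeomorph
    have hmp : MeasurePreserving (⇑(MeasurableEquiv.toLp 2 (Fin (m+1) → ℝ)).symm.symm)
        volume volume :=
      (EuclideanSpace.volume_preserving_symm_measurableEquiv_toLp (Fin (m+1))).symm _
    have hcoe : ⇑(MeasurableEquiv.toLp 2 (Fin (m+1) → ℝ)).symm.symm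
        = ⇑(e.symm) := rfl
    have happ : ∀ y, G' y (e w) = F' (e.symm y) w := by
      intro y
      simp [hG'_def]
    have hGint : Integrable (fun y => G' y (e w)) volume := by
      have h2 := (hmp.integrable_comp_emb
        (MeasurableEquiv.measurableEmbedding _)).mpr hint
      rw [hcoe] at h2
      simpa [happ, Function.comp_def] using h2
    have hkey := integral_fderiv_apply_eq_zero_pi G G' hG hsuppG (e w) hGint
    rw [← hkey]
    have h3 := hmp.integral_comp (MeasurableEquiv.measurableEmbedding _)
      (fun x => F' x w)
    rw [hcoe] at h3
    simp only [happ]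
    rw [← h3]

set_option maxHeartbeats 2000000 in
/-- Harvey–Polking type removable singularity lemma: if `v` is bounded, continuous on `U`,
vanishes on a relatively closed set `K`, is differentiable off `K` with pointwise gradient
`g ∈ L¹_loc(U)`, and `m(K_{3ε} ∩ supp η)/(ε|ln ε|) → 0` while `|v| ≲ 1/|ln ε|` on
`K_{3ε} \ K_ε`, then `g` is the weak gradient of `v` on `U`. -/
theorem stmt15 {n : ℕ} (U : Set (EuclideanSpace ℝ (Fin n))) (hU : IsOpen U)
    (K : Set (EuclideanSpace ℝ (Fin n))) (hKU : K ⊆ U)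
    (hKcl : ∀ x ∈ U, x ∈ closure K → x ∈ K)
    (v : EuclideanSpace ℝ (Fin n) → ℝ)
    (g : EuclideanSpace ℝ (Fin n) → (EuclideanSpace ℝ (Fin n) →L[ℝ] ℝ))
    (hvb : ∃ M : ℝ, ∀ x ∈ U, |v x| ≤ M)
    (hvc : ContinuousOn v U)
    (hvK : ∀ x ∈ K, v x = 0)
    (hdiff : ∀ x ∈ U \ K, HasFDerivAt v (g x) x)
    (hgloc : LocallyIntegrableOn (fun x => ‖g x‖) U volume)
    (hmeas : ∀ η : EuclideanSpace ℝ (Fin n) → ℝ,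
      ContDiff ℝ (⊤ : ℕ∞) η → HasCompactSupport η → tsupport η ⊆ U →
      Tendsto (fun ε : ℝ =>
          (volume ({x ∈ U | infDist x K ≤ 3 * ε} ∩ tsupport η)).toReal
            / (ε * |Real.log ε|))
        (nhdsWithin 0 (Set.Ioi 0)) (nhds 0))
    (hvsmall : ∃ C > (0:ℝ), ∃ ε₁ > (0:ℝ), ∀ ε ∈ Set.Ioo (0:ℝ) ε₁,
      ∀ x ∈ U, ε < infDist x K → infDist x K ≤ 3 * ε → |v x| ≤ C / |Real.log ε|) :
    ∀ η : EuclideanSpace ℝ (Fin n) → ℝ,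
      ContDiff ℝ (⊤ : ℕ∞) η → HasCompactSupport η → tsupport η ⊆ U →
      ∀ w : EuclideanSpace ℝ (Fin n),
        ∫ x in U, v x * fderiv ℝ η x w = - ∫ x in U, η x * g x w := by
  intro η hη hηcs hηU w
  classical
  obtain ⟨M₀, hM₀⟩ := hvb
  set M : ℝ := max M₀ 0 with hM_def
  have hM : ∀ x ∈ U, |v x| ≤ M := fun x hx => (hM₀ x hx).trans (le_max_left _ _)
  have hM0 : 0 ≤ M := le_max_right _ _
  obtain ⟨C, hC0, ε₁, hε₁0, hvs⟩ := hvsmall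
  obtain ⟨B, hB0, hcut⟩ := exists_cutoff K
  choose! ρ hρsm hρ0 hρ1 hρrange hρder using hcut
  set d : EuclideanSpace ℝ (Fin n) → ℝ := fun x => infDist x K with hd_def
  have hd_cont : Continuous d := continuous_infDist_pt K
  set l : Filter ℝ := nhdsWithin 0 (Set.Ioi 0) with hl_def
  have hmeas' := hmeas η hη hηcs hηU
  obtain ⟨Cη, hCη⟩ := hηcs.exists_bound_of_continuous hη.continuous
  have hCη0 : 0 ≤ Cη := (norm_nonneg (η 0)).trans (hCη 0)
  -- finiteness of measure of tsupport η
  have htsuppU : tsupport η ⊆ U := hηU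
  have hts_fin : volume (tsupport η) < ⊤ := hηcs.measure_lt_top
  -- the "bad" set Z is null
  set Z : Set (EuclideanSpace ℝ (Fin n)) := {x ∈ U | d x = 0} ∩ tsupport η with hZ_def
  have hZnull : volume Z = 0 := by
    have hsub : ∀ ε : ℝ, 0 < ε → Z ⊆ {x ∈ U | d x ≤ 3 * ε} ∩ tsupport η := by
      rintro ε hε x ⟨⟨hxU, hxd⟩, hxt⟩
      exact ⟨⟨hxU, by rw [hxd]; positivity⟩, hxt⟩
    have hfin : ∀ ε : ℝ, volume ({x ∈ U | d x ≤ 3 * ε} ∩ tsupport η) < ⊤ :=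
      fun ε => lt_of_le_of_lt (measure_mono Set.inter_subset_right) hts_fin
    have hc_le : ∀ᶠ ε in l, (volume Z).toReal ≤
        (volume ({x ∈ U | d x ≤ 3 * ε} ∩ tsupport η)).toReal / (ε * |Real.log ε|) := by
      filter_upwards [Ioo_mem_nhdsGT_of_mem (by norm_num : (0:ℝ) ∈ Set.Ico 0 1)] with ε hε
      obtain ⟨hε0, hε1⟩ := hε
      have hlog : 0 < |Real.log ε| := abs_pos.mpr (ne_of_lt (Real.log_neg hε0 hε1))
      have hden : 0 < ε * |Real.log ε| := mul_pos hε0 hlog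
      have h1 : (volume Z).toReal ≤
          (volume ({x ∈ U | d x ≤ 3 * ε} ∩ tsupport η)).toReal :=
        ENNReal.toReal_mono (hfin ε).ne (measure_mono (hsub ε hε0))
      have h2 : ε * |Real.log ε| ≤ 1 := by
        have := Real.abs_log_mul_self_lt ε hε0 hε1.le
        rw [abs_mul, abs_of_pos hε0] at this
        linarith [this, mul_comm |Real.log ε| ε]
      calc (volume Z).toReal ≤ (volume ({x ∈ U | d x ≤ 3 * ε} ∩ tsupport η)).toReal := h1
        _ ≤ (volume ({x ∈ U | d x ≤ 3 * ε} ∩ tsupport η)).toReal / (ε * |Real.log ε|) := by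
            rw [le_div_iff₀ hden]
            nlinarith [ENNReal.toReal_nonneg
              (a := volume ({x ∈ U | d x ≤ 3 * ε} ∩ tsupport η))]
    have hle0 : (volume Z).toReal ≤ 0 := ge_of_tendsto hmeas' hc_le
    have : (volume Z).toReal = 0 := le_antisymm hle0 ENNReal.toReal_nonneg
    rw [ENNReal.toReal_eq_zero_iff] at this
    rcases this with h | h
    · exact h
    · exact absurd h (lt_of_le_of_lt (measure_mono Set.inter_subset_right) hts_fin).ne
  -- basic measurability facts
  have hv_ind : AEStronglyMeasurable (U.indicator v) volume :=
    (aestronglyMeasurable_indicator_iff hU.measurableSet).mpr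
      (hvc.aestronglyMeasurable hU.measurableSet)
  have hη'c : Continuous fun x => fderiv ℝ η x := hη.continuous_fderiv (by simp)
  have hη'wc : Continuous fun x => fderiv ℝ η x w := hη'c.clm_apply continuous_const
  have hη'0 : ∀ x, x ∉ tsupport η → fderiv ℝ η x = 0 := by
    intro x hx
    by_contra h
    exact hx (support_fderiv_subset ℝ (Function.mem_support.mpr h))
  have hηU0 : ∀ x, x ∉ U → η x = 0 :=
    fun x hx => image_eq_zero_of_notMem_tsupport (fun h => hx (htsuppU h))
  have hη'U0 : ∀ x, x ∉ U → fderiv ℝ η x = 0 :=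
    fun x hx => hη'0 x (fun h => hx (htsuppU h))
  -- integrability of ‖g‖ on tsupport η
  have hg_int : IntegrableOn (fun x => ‖g x‖) (tsupport η) volume :=
    hgloc.integrableOn_compact_subset htsuppU hηcs
  -- the three integrands
  set A : ℝ → EuclideanSpace ℝ (Fin n) → ℝ :=
    fun ε x => v x * ρ ε x * fderiv ℝ η x w with hA_def
  set Bf : ℝ → EuclideanSpace ℝ (Fin n) → ℝ :=
    fun ε x => v x * η x * fderiv ℝ (ρ ε) x w with hB_def
  set Cf : ℝ → EuclideanSpace ℝ (Fin n) → ℝ :=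
    fun ε x => ρ ε x * η x * (g x w) with hC_def
  -- properties of ρ ε for ε > 0
  have hρcont : ∀ ε : ℝ, 0 < ε → Continuous (ρ ε) :=
    fun ε hε => (hρsm ε hε).continuous
  have hρdiff : ∀ ε : ℝ, 0 < ε → Differentiable ℝ (ρ ε) :=
    fun ε hε => (hρsm ε hε).differentiable (by simp)
  have hρ'cont : ∀ ε : ℝ, 0 < ε → Continuous fun x => fderiv ℝ (ρ ε) x :=
    fun ε hε => (hρsm ε hε).continuous_fderiv (by simp)
  have hρ'0 : ∀ ε : ℝ, 0 < ε → ∀ x, d x < (7/5) * ε → fderiv ℝ (ρ ε) x = 0 := by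
    intro ε hε x hx
    have hev : ρ ε =ᶠ[nhds x] (fun _ => (0:ℝ)) := by
      filter_upwards [(isOpen_lt hd_cont continuous_const).mem_nhds (by exact hx :
        x ∈ {y | d y < (7/5) * ε})] with y hy
      exact hρ0 ε hε y hy
    rw [hev.fderiv_eq]; exact fderiv_const_apply 0
  have hρ'1 : ∀ ε : ℝ, 0 < ε → ∀ x, (13/5) * ε < d x → fderiv ℝ (ρ ε) x = 0 := by
    intro ε hε x hx
    have hev : ρ ε =ᶠ[nhds x] (fun _ => (1:ℝ)) := by
      filter_upwards [(isOpen_lt continuous_const hd_cont).mem_nhds (by exact hx :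
        x ∈ {y | (13/5) * ε < d y})] with y hy
      exact hρ1 ε hε y hy
    rw [hev.fderiv_eq]; exact fderiv_const_apply 1
  -- integrable bound functions
  have hbA_int : Integrable (fun x => M * ‖fderiv ℝ η x w‖) volume := by
    apply Continuous.integrable_of_hasCompactSupport
    · exact continuous_const.mul hη'wc.norm
    · exact (((hηcs.fderiv ℝ).comp_left (g := fun L :
        (EuclideanSpace ℝ (Fin n) →L[ℝ] ℝ) => L w) rfl).norm).mul_left
  have hbC_int : Integrable
      ((tsupport η).indicator fun x => Cη * ‖w‖ * ‖g x‖) volume := by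
    apply (IntegrableOn.integrable_indicator ?_ (isClosed_tsupport η).measurableSet)
    exact (hg_int.const_mul (Cη * ‖w‖))
  -- a.e. strong measurability of the integrands
  have hA_meas : ∀ ε : ℝ, 0 < ε → AEStronglyMeasurable (A ε) volume := by
    intro ε hε
    have heq : A ε = fun x => U.indicator v x * ρ ε x * fderiv ℝ η x w := by
      funext x
      by_cases hx : x ∈ U
      · simp [hA_def, Set.indicator_of_mem hx]
      · simp [hA_def, Set.indicator_of_notMem hx, hη'U0 x hx]
    rw [heq]
    exact (hv_ind.mul (hρcont ε hε).aestronglyMeasurable).mul hη'wc.aestronglyMeasurable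
  have hB_meas : ∀ ε : ℝ, 0 < ε → AEStronglyMeasurable (Bf ε) volume := by
    intro ε hε
    have heq : Bf ε = fun x => U.indicator v x * η x * fderiv ℝ (ρ ε) x w := by
      funext x
      by_cases hx : x ∈ U
      · simp [hB_def, Set.indicator_of_mem hx]
      · simp [hB_def, Set.indicator_of_notMem hx, hηU0 x hx]
    rw [heq]
    exact (hv_ind.mul hη.continuous.aestronglyMeasurable).mul
      ((hρ'cont ε hε).clm_apply continuous_const).aestronglyMeasurable
  have hC_meas : ∀ ε : ℝ, 0 < ε → AEStronglyMeasurable (Cf ε) volume := by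
    intro ε hε
    have heq : Cf ε = U.indicator (Cf ε) := by
      funext x
      by_cases hx : x ∈ U
      · rw [Set.indicator_of_mem hx]
      · rw [Set.indicator_of_notMem hx]
        simp [hC_def, hηU0 x hx]
    rw [heq]
    apply (aestronglyMeasurable_indicator_iff hU.measurableSet).mpr
    have hmeq : (fun x => ρ ε x * η x * (fderiv ℝ v x w)) =ᵐ[volume.restrict U] Cf ε := by
      have hZ' : volume.restrict U Z = 0 :=
        le_antisymm ((Measure.restrict_apply_le U Z).trans hZnull.le) (by simp)
      have : ∀ᵐ x ∂volume.restrict U, x ∉ Z := by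
        rw [MeasureTheory.ae_iff]
        simp only [not_not]
        exact hZ'
      filter_upwards [this, ae_restrict_mem hU.measurableSet] with x hxZ hxU
      by_cases hxt : x ∈ tsupport η
      · have hxK : x ∉ K := by
          intro hxK
          exact hxZ ⟨⟨hxU, infDist_zero_of_mem hxK⟩, hxt⟩
        have := (hdiff x ⟨hxU, hxK⟩).fderiv
        simp [hC_def, this]
      · simp [hC_def, image_eq_zero_of_notMem_tsupport hxt]
    refine AEStronglyMeasurable.congr ?_ hmeq
    exact (((hρcont ε hε).aestronglyMeasurable.mul hη.continuous.aestronglyMeasurable).mul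
      (measurable_fderiv_apply_const ℝ v w).aestronglyMeasurable).restrict
  -- vanishing outside U
  have hA_van : ∀ ε x, x ∉ U → A ε x = 0 := by
    intro ε x hx; simp [hA_def, hη'U0 x hx]
  have hB_van : ∀ ε x, x ∉ U → Bf ε x = 0 := by
    intro ε x hx; simp [hB_def, hηU0 x hx]
  have hC_van : ∀ ε x, x ∉ U → Cf ε x = 0 := by
    intro ε x hx; simp [hC_def, hηU0 x hx]
  -- pointwise bounds
  have hA_bd : ∀ ε : ℝ, 0 < ε → ∀ x, ‖A ε x‖ ≤ M * ‖fderiv ℝ η x w‖ := by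
    intro ε hε x
    by_cases hx : x ∈ U
    · rw [hA_def]
      simp only [norm_mul]
      have h1 : ‖v x‖ ≤ M := by rw [Real.norm_eq_abs]; exact hM x hx
      have h2 : ‖ρ ε x‖ ≤ 1 := by
        rw [Real.norm_eq_abs, abs_of_nonneg (hρrange ε hε x).1]
        exact (hρrange ε hε x).2
      calc ‖v x‖ * ‖ρ ε x‖ * ‖fderiv ℝ η x w‖ ≤ M * 1 * ‖fderiv ℝ η x w‖ := by
            apply mul_le_mul_of_nonneg_right ?_ (norm_nonneg _)
            exact mul_le_mul h1 h2 (norm_nonneg _) hM0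
        _ = M * ‖fderiv ℝ η x w‖ := by ring
    · rw [hA_van ε x hx, norm_zero]
      positivity
  have hC_bd : ∀ ε : ℝ, 0 < ε → ∀ x, ‖Cf ε x‖ ≤
      (tsupport η).indicator (fun x => Cη * ‖w‖ * ‖g x‖) x := by
    intro ε hε x
    by_cases hx : x ∈ tsupport η
    · rw [Set.indicator_of_mem hx, hC_def]
      simp only [norm_mul]
      have h2 : ‖ρ ε x‖ ≤ 1 := by
        rw [Real.norm_eq_abs, abs_of_nonneg (hρrange ε hε x).1]
        exact (hρrange ε hε x).2
      have h3 : ‖g x w‖ ≤ ‖g x‖ * ‖w‖ := (g x).le_opNorm w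
      calc ‖ρ ε x‖ * ‖η x‖ * ‖g x w‖ ≤ 1 * Cη * (‖g x‖ * ‖w‖) :=
            mul_le_mul (mul_le_mul h2 (hCη x) (norm_nonneg _) zero_le_one) h3
              (norm_nonneg _) (by positivity)
        _ = Cη * ‖w‖ * ‖g x‖ := by ring
    · rw [Set.indicator_of_notMem hx, hC_def]
      simp [image_eq_zero_of_notMem_tsupport hx]
  -- integrability of all three
  have hA_int : ∀ ε : ℝ, 0 < ε → Integrable (A ε) volume := by
    intro ε hε
    exact hbA_int.mono' (hA_meas ε hε) (Filter.Eventually.of_forall (hA_bd ε hε))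
  have hB_int : ∀ ε : ℝ, 0 < ε → Integrable (Bf ε) volume := by
    intro ε hε
    have hbd : ∀ x, ‖Bf ε x‖ ≤ (M * (B / ε * ‖w‖)) * ‖η x‖ := by
      intro x
      by_cases hx : x ∈ U
      · rw [hB_def]
        simp only [norm_mul]
        have h1 : ‖v x‖ ≤ M := by rw [Real.norm_eq_abs]; exact hM x hx
        have h3 : ‖fderiv ℝ (ρ ε) x w‖ ≤ B / ε * ‖w‖ :=
          le_trans ((fderiv ℝ (ρ ε) x).le_opNorm w)
            (mul_le_mul_of_nonneg_right (hρder ε hε x) (norm_nonneg _))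
        calc ‖v x‖ * ‖η x‖ * ‖fderiv ℝ (ρ ε) x w‖
            ≤ M * ‖η x‖ * (B / ε * ‖w‖) := by
              apply mul_le_mul ?_ h3 (norm_nonneg _) (by positivity)
              exact mul_le_mul_of_nonneg_right h1 (norm_nonneg _)
          _ = (M * (B / ε * ‖w‖)) * ‖η x‖ := by ring
      · rw [hB_van ε x hx, norm_zero]
        positivity
    have hbint : Integrable (fun x => (M * (B / ε * ‖w‖)) * ‖η x‖) volume := by
      apply Continuous.integrable_of_hasCompactSupport
      · exact continuous_const.mul hη.continuous.norm
      · exact hηcs.norm.mul_left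
    exact hbint.mono' (hB_meas ε hε) (Filter.Eventually.of_forall hbd)
  have hC_int : ∀ ε : ℝ, 0 < ε → Integrable (Cf ε) volume := by
    intro ε hε
    exact hbC_int.mono' (hC_meas ε hε) (Filter.Eventually.of_forall (hC_bd ε hε))
  -- the key identity for each ε > 0
  have hIdent : ∀ ε : ℝ, 0 < ε →
      (∫ x in U, A ε x) = - (∫ x in U, Cf ε x) - ∫ x in U, Bf ε x := by
    intro ε hε
    set F : EuclideanSpace ℝ (Fin n) → ℝ := fun x => v x * (ρ ε x * η x) with hF_def
    set D : EuclideanSpace ℝ (Fin n) → (EuclideanSpace ℝ (Fin n) →L[ℝ] ℝ) :=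
      fun x => v x • (ρ ε x • fderiv ℝ η x + η x • fderiv ℝ (ρ ε) x)
        + (ρ ε x * η x) • g x with hD_def
    have hFD : ∀ x, HasFDerivAt F (D x) x := by
      intro x
      by_cases hxt : x ∈ tsupport η
      · have hxU : x ∈ U := htsuppU hxt
        by_cases hxd : ε < d x
        · have hxK : x ∉ K := fun hxK => by
            rw [hd_def] at hxd
            simp [infDist_zero_of_mem hxK] at hxd
            linarith
          have hv' := hdiff x ⟨hxU, hxK⟩
          have hρη : HasFDerivAt (fun y => ρ ε y * η y)
              (ρ ε x • fderiv ℝ η x + η x • fderiv ℝ (ρ ε) x) x :=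
            ((hρdiff ε hε) x).hasFDerivAt.mul ((hη.differentiable (by simp)) x).hasFDerivAt
          exact hv'.mul hρη
        · push_neg at hxd
          have hxd' : d x < (7/5) * ε := lt_of_le_of_lt hxd (by linarith)
          have hF0 : F =ᶠ[nhds x] (fun _ => (0:ℝ)) := by
            filter_upwards [(isOpen_lt hd_cont continuous_const).mem_nhds
              (by exact hxd' : x ∈ {y | d y < (7/5) * ε})] with y hy
            simp [hF_def, hρ0 ε hε y hy]
          have hD0 : D x = 0 := by
            rw [hD_def]
            simp [hρ0 ε hε x hxd', hρ'0 ε hε x hxd']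
          rw [hD0]
          exact (hasFDerivAt_const (0:ℝ) x).congr_of_eventuallyEq hF0
      · have hF0 : F =ᶠ[nhds x] (fun _ => (0:ℝ)) := by
          filter_upwards [(isOpen_compl_iff.mpr (isClosed_tsupport η)).mem_nhds hxt] with y hy
          simp [hF_def, image_eq_zero_of_notMem_tsupport hy]
        have hD0 : D x = 0 := by
          rw [hD_def]
          simp [image_eq_zero_of_notMem_tsupport hxt, hη'0 x hxt]
        rw [hD0]
        exact (hasFDerivAt_const (0:ℝ) x).congr_of_eventuallyEq hF0
    have hFcs : HasCompactSupport F :=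
      HasCompactSupport.intro hηcs (fun x hx => by
        simp [hF_def, image_eq_zero_of_notMem_tsupport hx])
    have hDw : ∀ x, D x w = A ε x + Bf ε x + Cf ε x := by
      intro x
      simp only [hD_def, hA_def, hB_def, hC_def, ContinuousLinearMap.add_apply,
        ContinuousLinearMap.smul_apply, smul_eq_mul]
      ring
    have hDint : Integrable (fun x => D x w) volume := by
      have : (fun x => D x w) = fun x => A ε x + Bf ε x + Cf ε x := funext hDw
      rw [this]
      exact ((hA_int ε hε).add (hB_int ε hε)).add (hC_int ε hε)
    have hzero := integral_fderiv_apply_eq_zero F D hFD hFcs w hDint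
    have hsplit : ∫ x, D x w = (∫ x, A ε x) + (∫ x, Bf ε x) + ∫ x, Cf ε x := by
      have heq : (fun x => D x w) = fun x => A ε x + Bf ε x + Cf ε x := funext hDw
      have hi1 : Integrable (fun x => A ε x + Bf ε x) volume :=
        (hA_int ε hε).add (hB_int ε hε)
      rw [heq, integral_add hi1 (hC_int ε hε), integral_add (hA_int ε hε) (hB_int ε hε)]
    have hAU : ∫ x in U, A ε x = ∫ x, A ε x :=
      setIntegral_eq_integral_of_forall_compl_eq_zero (fun x hx => hA_van ε x hx)
    have hBU : ∫ x in U, Bf ε x = ∫ x, Bf ε x :=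
      setIntegral_eq_integral_of_forall_compl_eq_zero (fun x hx => hB_van ε x hx)
    have hCU : ∫ x in U, Cf ε x = ∫ x, Cf ε x :=
      setIntegral_eq_integral_of_forall_compl_eq_zero (fun x hx => hC_van ε x hx)
    rw [hAU, hBU, hCU]
    rw [hsplit] at hzero
    linarith
  -- a.e. facts for the dominated convergence arguments
  have hae : ∀ᵐ x ∂volume.restrict U, x ∈ U ∧ x ∉ Z := by
    have h1 : ∀ᵐ x ∂volume.restrict U, x ∉ Z := by
      rw [MeasureTheory.ae_iff]
      simp only [not_not]
      exact le_antisymm ((Measure.restrict_apply_le U Z).trans hZnull.le) (by simp)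
    filter_upwards [h1, ae_restrict_mem hU.measurableSet] with x h2 h3
    exact ⟨h3, h2⟩
  have hdpos : ∀ x, x ∈ U → x ∉ Z → x ∈ tsupport η → 0 < d x := by
    intro x hxU hxZ hxt
    rcases lt_or_eq_of_le (infDist_nonneg (s := K) (x := x)) with h | h
    · exact h
    · exact absurd ⟨⟨hxU, h.symm⟩, hxt⟩ hxZ
  have hρ_ev1 : ∀ x, 0 < d x → ∀ᶠ ε in l, ρ ε x = 1 := by
    intro x hdx
    filter_upwards [Ioo_mem_nhdsGT_of_mem
      (⟨le_refl 0, by positivity⟩ : (0:ℝ) ∈ Set.Ico 0 (5/13 * d x))] with ε hε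
    exact hρ1 ε hε.1 x (by nlinarith [hε.2])
  -- limit of ∫ A
  have hL1 : Tendsto (fun ε => ∫ x in U, A ε x) l
      (nhds (∫ x in U, v x * fderiv ℝ η x w)) := by
    apply tendsto_integral_filter_of_dominated_convergence
      (fun x => M * ‖fderiv ℝ η x w‖)
    · filter_upwards [self_mem_nhdsWithin] with ε hε
      exact (hA_meas ε hε).restrict
    · filter_upwards [self_mem_nhdsWithin] with ε hε
      exact Filter.Eventually.of_forall (hA_bd ε hε)
    · exact hbA_int.restrict
    · filter_upwards [hae] with x hx
      obtain ⟨hxU, hxZ⟩ := hx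
      by_cases hxt : x ∈ tsupport η
      · have hev := hρ_ev1 x (hdpos x hxU hxZ hxt)
        apply Tendsto.congr' ?_ tendsto_const_nhds
        filter_upwards [hev] with ε hε
        show v x * fderiv ℝ η x w = v x * ρ ε x * fderiv ℝ η x w
        rw [hε, mul_one]
      · have : ∀ ε, A ε x = v x * fderiv ℝ η x w := by
          intro ε; simp [hA_def, hη'0 x hxt]
        exact Tendsto.congr (fun ε => (this ε).symm) tendsto_const_nhds
  -- limit of ∫ Cf
  have hL2 : Tendsto (fun ε => ∫ x in U, Cf ε x) l
      (nhds (∫ x in U, η x * g x w)) := by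
    apply tendsto_integral_filter_of_dominated_convergence
      ((tsupport η).indicator fun x => Cη * ‖w‖ * ‖g x‖)
    · filter_upwards [self_mem_nhdsWithin] with ε hε
      exact (hC_meas ε hε).restrict
    · filter_upwards [self_mem_nhdsWithin] with ε hε
      exact Filter.Eventually.of_forall (hC_bd ε hε)
    · exact hbC_int.restrict
    · filter_upwards [hae] with x hx
      obtain ⟨hxU, hxZ⟩ := hx
      by_cases hxt : x ∈ tsupport η
      · have hev := hρ_ev1 x (hdpos x hxU hxZ hxt)
        apply Tendsto.congr' ?_ tendsto_const_nhds
        filter_upwards [hev] with ε hε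
        show η x * g x w = ρ ε x * η x * g x w
        rw [hε, one_mul]
      · have h0 : η x = 0 := image_eq_zero_of_notMem_tsupport hxt
        have : ∀ ε, Cf ε x = η x * g x w := by
          intro ε; simp [hC_def, h0]
        exact Tendsto.congr (fun ε => (this ε).symm) tendsto_const_nhds
  -- limit of ∫ Bf : squeeze to 0
  have hL3 : Tendsto (fun ε => ∫ x in U, Bf ε x) l (nhds 0) := by
    set cst : ℝ := C * Cη * (B * ‖w‖) with hcst_def
    have hcst0 : 0 ≤ cst := by positivity
    apply squeeze_zero_norm' (a := fun ε => cst *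
      ((volume ({x ∈ U | d x ≤ 3 * ε} ∩ tsupport η)).toReal / (ε * |Real.log ε|)))
    · filter_upwards [Ioo_mem_nhdsGT_of_mem
        (⟨le_refl 0, lt_min hε₁0 one_pos⟩ : (0:ℝ) ∈ Set.Ico 0 (min ε₁ 1))] with ε hε
      obtain ⟨hε0, hεlt⟩ := hε
      have hεε₁ : ε < ε₁ := lt_of_lt_of_le hεlt (min_le_left _ _)
      have hε1 : ε < 1 := lt_of_lt_of_le hεlt (min_le_right _ _)
      set Sε : Set (EuclideanSpace ℝ (Fin n)) :=
        {x ∈ U | d x ≤ 3 * ε} ∩ tsupport η with hSε_def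
      have hSεmeas : MeasurableSet Sε := by
        apply MeasurableSet.inter ?_ (isClosed_tsupport η).measurableSet
        exact (hU.measurableSet.inter
          (measurableSet_le (hd_cont.measurable) measurable_const))
      have hSεfin : volume Sε < ⊤ :=
        lt_of_le_of_lt (measure_mono Set.inter_subset_right) hts_fin
      have hptw : ∀ x, ‖Bf ε x‖ ≤
          (cst / (ε * |Real.log ε|)) * Sε.indicator (fun _ => (1:ℝ)) x := by
        intro x
        have hlog : 0 < |Real.log ε| := abs_pos.mpr (ne_of_lt (Real.log_neg hε0 hε1))
        have hrhs0 : 0 ≤ cst / (ε * |Real.log ε|) := by positivity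
        by_cases hmain : x ∈ U ∧ x ∈ tsupport η ∧ (7/5) * ε ≤ d x ∧ d x ≤ (13/5) * ε
        · obtain ⟨hxU, hxt, hd1, hd2⟩ := hmain
          have hεd : ε < d x := by linarith
          have hd3 : d x ≤ 3 * ε := by linarith
          have hv_small : |v x| ≤ C / |Real.log ε| :=
            hvs ε ⟨hε0, hεε₁⟩ x hxU hεd hd3
          have hxS : x ∈ Sε := ⟨⟨hxU, hd3⟩, hxt⟩
          rw [Set.indicator_of_mem hxS]
          rw [hB_def]
          simp only [norm_mul, mul_one]
          have h3 : ‖fderiv ℝ (ρ ε) x w‖ ≤ B / ε * ‖w‖ :=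
            le_trans ((fderiv ℝ (ρ ε) x).le_opNorm w)
              (mul_le_mul_of_nonneg_right (hρder ε hε0 x) (norm_nonneg _))
          calc ‖v x‖ * ‖η x‖ * ‖fderiv ℝ (ρ ε) x w‖
              ≤ (C / |Real.log ε|) * Cη * (B / ε * ‖w‖) := by
                apply mul_le_mul ?_ h3 (norm_nonneg _) (by positivity)
                apply mul_le_mul ?_ (hCη x) (norm_nonneg _) (by positivity)
                rw [Real.norm_eq_abs]; exact hv_small
            _ = cst / (ε * |Real.log ε|) := by
                rw [hcst_def]; field_simp
        · have hB0' : Bf ε x = 0 := by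
            push_neg at hmain
            by_cases hxU : x ∈ U
            · by_cases hxt : x ∈ tsupport η
              · rcases lt_or_ge (d x) ((7/5) * ε) with h | h
                · simp [hB_def, hρ'0 ε hε0 x h]
                · have := hmain hxU hxt h
                  simp [hB_def, hρ'1 ε hε0 x (by linarith)]
              · simp [hB_def, image_eq_zero_of_notMem_tsupport hxt]
            · simp [hB_def, hηU0 x hxU]
          rw [hB0']
          simp only [norm_zero]
          apply mul_nonneg hrhs0
          exact Set.indicator_nonneg (fun _ _ => zero_le_one) x
      calc ‖∫ x in U, Bf ε x‖ ≤ ∫ x in U, ‖Bf ε x‖ := norm_integral_le_integral_norm _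
        _ ≤ ∫ x in U, (cst / (ε * |Real.log ε|)) * Sε.indicator (fun _ => (1:ℝ)) x := by
            apply integral_mono ((hB_int ε hε0).norm.restrict) ?_ hptw
            apply Integrable.restrict
            apply Integrable.const_mul
            rw [integrable_indicator_iff hSεmeas]
            exact integrableOn_const hSεfin.ne
        _ = (cst / (ε * |Real.log ε|)) * ∫ x in U, Sε.indicator (fun _ => (1:ℝ)) x := by
            rw [integral_const_mul]
        _ ≤ cst * ((volume Sε).toReal / (ε * |Real.log ε|)) := by
            have h1 : ∫ x in U, Sε.indicator (fun _ => (1:ℝ)) x = (volume Sε).toReal := by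
              rw [setIntegral_eq_integral_of_forall_compl_eq_zero
                (fun x hx => Set.indicator_of_notMem
                  (fun hmem => hx hmem.1.1) _),
                integral_indicator_const (1:ℝ) hSεmeas]
              simp [measureReal_def]
            rw [h1]
            apply le_of_eq
            ring
    · have := hmeas'.const_mul cst
      simpa using this
  -- conclude
  have hfinal : Tendsto (fun ε => ∫ x in U, A ε x) l
      (nhds (- (∫ x in U, η x * g x w) - 0)) := by
    apply Tendsto.congr' ?_ ((hL2.neg).sub hL3)
    filter_upwards [self_mem_nhdsWithin] with ε hε
    exact (hIdent ε hε).symm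
  have := tendsto_nhds_unique hL1 hfinal
  rw [this]
  ring
end
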